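/- arXiv:2507.09818 — 4 statements merged into one kernel-verified Lean document; each statement's English description precedes it below -/
import Mathlib

section
/- Let X be a finite set of real numbers such that X ∩ ℤ = ∅, X ∩ (X + k) = ∅ for every nonzero k ∈ ℤ, and X ∩ 2^j·X = ∅ for every nonzero j ∈ ℤ. Then there exists δ > 0 such that for every choice of radii ε : X → ℝ with 0 < ε(x) < δ for all x ∈ X, the set ⋃_{x∈X} (x − ε(x), x + ε(x)) is contained in a wavelet set. -/
open MeasureTheory

/-- `W` tiles `ℝ` by integer translations. -/
def TilesByTranslations (W : Set ℝ) : Prop :=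
  ∀ᵐ ξ ∂(volume : Measure ℝ), ∃! k : ℤ, ξ + (k : ℝ) ∈ W

/-- `W` tiles `ℝ` by dyadic dilations. -/
def TilesByDilations (W : Set ℝ) : Prop :=
  ∀ᵐ ξ ∂(volume : Measure ℝ), ∃! j : ℤ, (2 : ℝ) ^ j * ξ ∈ W

/-- A wavelet set: a measurable set tiling `ℝ` both by integer translations and by
dyadic dilations. -/
def IsWaveletSet (W : Set ℝ) : Prop :=
  MeasurableSet W ∧ TilesByTranslations W ∧ TilesByDilations W

open Set

namespace WS

open scoped Classical

noncomputable section

/-- Shannon wavelet set -/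
def W0 : Set ℝ := Set.Ico (1/2 : ℝ) 1 ∪ Set.Ico (-1 : ℝ) (-(1/2))

/-- translation by an integer -/
def tr (m : ℤ) (S : Set ℝ) : Set ℝ := {t | t - m ∈ S}

/-- dilation by 2^p -/
def dl (p : ℤ) (S : Set ℝ) : Set ℝ := {t | (2:ℝ)^(-p) * t ∈ S}

lemma mem_tr {m : ℤ} {S : Set ℝ} {t : ℝ} : t ∈ tr m S ↔ t - m ∈ S := Iff.rfl
lemma mem_dl {p : ℤ} {S : Set ℝ} {t : ℝ} : t ∈ dl p S ↔ (2:ℝ)^(-p) * t ∈ S := Iff.rfl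

lemma W0_bounds {t : ℝ} (ht : t ∈ W0) : -1 ≤ t ∧ t < 1 := by
  rcases ht with ht | ht <;> simp only [mem_Ico] at ht <;> constructor <;>
    linarith [ht.1, ht.2]

lemma W0_abs {t : ℝ} (ht : t ∈ W0) : 1/2 ≤ |t| ∧ |t| ≤ 1 := by
  rcases ht with ht | ht <;> simp only [mem_Ico] at ht
  · rw [abs_of_nonneg (by linarith [ht.1])]; constructor <;> linarith [ht.1, ht.2]
  · rw [abs_of_nonpos (by linarith [ht.2])]; constructor <;> linarith [ht.1, ht.2]

lemma W0_unique_shift {a b : ℝ} (ha : a ∈ W0) (hb : b ∈ W0) {d : ℤ}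
    (hd : a - b = d) : d = 0 := by
  by_contra hne
  have hb1 := W0_bounds ha
  have hb2 := W0_bounds hb
  have h2 : ((d:ℝ)) < 2 := by rw [← hd]; linarith [hb1.2, hb2.1]
  have h2' : (-2:ℝ) < d := by rw [← hd]; linarith [hb1.1, hb2.2]
  have hd2 : d < 2 := by exact_mod_cast h2
  have hd2' : -2 < d := by exact_mod_cast h2'
  interval_cases d
  · -- d = -1 : b = a + 1
    have hba : b = a + 1 := by push_cast at hd; linarith
    rcases ha with h1 | h1 <;> rcases hb with h2 | h2 <;>
      simp only [mem_Ico] at h1 h2 <;> rw [hba] at h2 <;>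
      linarith [h1.1, h1.2, h2.1, h2.2]
  · exact hne rfl
  · have hba : a = b + 1 := by push_cast at hd; linarith
    rcases ha with h1 | h1 <;> rcases hb with h2 | h2 <;>
      simp only [mem_Ico] at h1 h2 <;> rw [hba] at h1 <;>
      linarith [h1.1, h1.2, h2.1, h2.2]

/-- Shannon translation tiling: pointwise! -/
lemma shannonT (ξ : ℝ) : ∃! k : ℤ, ξ + (k : ℝ) ∈ W0 := by
  have hfr0 : (0:ℝ) ≤ ξ - ⌊ξ⌋ := by linarith [Int.floor_le ξ]
  have hfr1 : ξ - ⌊ξ⌋ < 1 := by linarith [Int.lt_floor_add_one ξ]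
  have huniq : ∀ k k' : ℤ, ξ + k ∈ W0 → ξ + k' ∈ W0 → k = k' := by
    intro k k' hk hk'
    have : (ξ + k) - (ξ + k') = ((k - k' : ℤ) : ℝ) := by push_cast; ring
    have := W0_unique_shift hk hk' this
    omega
  by_cases h : ξ - ⌊ξ⌋ < 1/2
  · refine ⟨-⌊ξ⌋ - 1, ?_, fun k hk => huniq k _ hk ?_⟩ <;>
    · refine Or.inr ?_
      simp only [mem_Ico]
      push_cast
      constructor <;> linarith
  · refine ⟨-⌊ξ⌋, ?_, fun k hk => huniq k _ hk ?_⟩ <;>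
    · refine Or.inl ?_
      simp only [mem_Ico]
      push_cast
      constructor <;> linarith

-- dyadic location lemmas
lemma exists_zpow_Ico {y : ℝ} (hy : 0 < y) : ∃ j : ℤ, (2:ℝ)^j * y ∈ Set.Ico (1/2 : ℝ) 1 := by
  set L := Int.log 2 y with hL
  have h1 : (2:ℝ)^L ≤ y := Int.zpow_log_le_self (by norm_num) hy
  have h2 : y < (2:ℝ)^(L+1) := Int.lt_zpow_succ_log_self (by norm_num) y
  have hpos : (0:ℝ) < (2:ℝ)^(L+1) := by positivity
  have hzadd : (2:ℝ)^(L+1) = 2^L * 2 := by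
    rw [zpow_add₀ (by norm_num : (2:ℝ) ≠ 0)]; norm_num
  refine ⟨-(L+1), ?_, ?_⟩
  · rw [zpow_neg, inv_mul_eq_div, le_div_iff₀ hpos, hzadd]
    nlinarith
  · rw [zpow_neg, inv_mul_eq_div, div_lt_one hpos]
    exact h2

lemma zpow_unique_Ico {y : ℝ} (hy : 0 < y) {j j' : ℤ}
    (h : (2:ℝ)^j * y ∈ Set.Ico (1/2 : ℝ) 1) (h' : (2:ℝ)^j' * y ∈ Set.Ico (1/2 : ℝ) 1) :
    j = j' := by
  simp only [mem_Ico] at h h'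
  by_contra hne
  rcases lt_or_gt_of_ne hne with hlt | hlt
  · have : j + 1 ≤ j' := by omega
    have h21 : (2:ℝ)^(j+1) ≤ (2:ℝ)^j' := zpow_le_zpow_right₀ (by norm_num) this
    have : (2:ℝ)^(j+1) * y ≤ (2:ℝ)^j' * y := by
      apply mul_le_mul_of_nonneg_right h21 (le_of_lt hy)
    rw [zpow_add₀ (by norm_num : (2:ℝ) ≠ 0)] at this
    nlinarith [h.1, h'.2]
  · have : j' + 1 ≤ j := by omega
    have h21 : (2:ℝ)^(j'+1) ≤ (2:ℝ)^j := zpow_le_zpow_right₀ (by norm_num) this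
    have : (2:ℝ)^(j'+1) * y ≤ (2:ℝ)^j * y := by
      apply mul_le_mul_of_nonneg_right h21 (le_of_lt hy)
    rw [zpow_add₀ (by norm_num : (2:ℝ) ≠ 0)] at this
    nlinarith [h'.1, h.2]

lemma exists_zpow_Ioc {y : ℝ} (hy : 0 < y) : ∃ j : ℤ, (2:ℝ)^j * y ∈ Set.Ioc (1/2 : ℝ) 1 := by
  obtain ⟨j, hj⟩ := exists_zpow_Ico (show (0:ℝ) < 1/y by positivity)
  simp only [mem_Ico] at hj
  refine ⟨-(j+1), ?_, ?_⟩ <;> rw [zpow_neg]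
  · have hpos : (0:ℝ) < (2:ℝ)^(j+1) := by positivity
    rw [inv_mul_eq_div, lt_div_iff₀ hpos]
    have h0 : (2:ℝ)^j * (1/y) < 1 := hj.2
    have h3 := mul_lt_mul_of_pos_right h0 hy
    have h4 : (2:ℝ)^j * (1/y) * y = (2:ℝ)^j := by field_simp
    rw [h4, one_mul] at h3
    rw [zpow_add₀ (by norm_num : (2:ℝ) ≠ 0)]
    nlinarith
  · have hpos : (0:ℝ) < (2:ℝ)^(j+1) := by positivity
    rw [inv_mul_eq_div, div_le_one hpos]
    have h0 : (1/2:ℝ) ≤ (2:ℝ)^j * (1/y) := hj.1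
    have h3 := mul_le_mul_of_nonneg_right h0 (le_of_lt hy)
    have h4 : (2:ℝ)^j * (1/y) * y = (2:ℝ)^j := by
      field_simp
    rw [h4] at h3
    rw [zpow_add₀ (by norm_num : (2:ℝ) ≠ 0)]
    nlinarith

/-- Shannon dilation tiling : pointwise away from 0 -/
lemma shannonD (ξ : ℝ) (hξ : ξ ≠ 0) : ∃! j : ℤ, (2:ℝ)^j * ξ ∈ W0 := by
  rcases lt_or_gt_of_ne hξ with hneg | hpos
  · -- ξ < 0 : need 2^j ξ ∈ [-1,-1/2) i.e. 2^j(-ξ) ∈ (1/2, 1]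
    obtain ⟨j, hj⟩ := exists_zpow_Ioc (show (0:ℝ) < -ξ by linarith)
    simp only [mem_Ioc] at hj
    have hmem : (2:ℝ)^j * ξ ∈ W0 := by
      refine Or.inr ?_
      simp only [mem_Ico]
      constructor <;> nlinarith [hj.1, hj.2]
    refine ⟨j, hmem, fun j' hj' => ?_⟩
    -- uniqueness
    have conv : ∀ i : ℤ, (2:ℝ)^i * ξ ∈ W0 → (2:ℝ)^i * (-ξ) ∈ Set.Ioc (1/2:ℝ) 1 := by
      intro i hi
      rcases hi with hi | hi <;> simp only [mem_Ico] at hi <;> simp only [mem_Ioc]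
      · nlinarith [hi.1, hi.2, zpow_pos (show (0:ℝ) < 2 by norm_num) i]
      · constructor <;> nlinarith [hi.1, hi.2]
    have h1 := conv _ hj'
    have h2 : (2:ℝ)^j * (-ξ) ∈ Set.Ioc (1/2:ℝ) 1 := by simp only [mem_Ioc]; exact hj
    simp only [mem_Ioc] at h1 h2
    by_contra hne
    rcases lt_or_gt_of_ne hne with hlt | hlt
    · -- j' < j
      have : j' + 1 ≤ j := by omega
      have h21 : (2:ℝ)^(j'+1) ≤ (2:ℝ)^j := zpow_le_zpow_right₀ (by norm_num) this
      have : (2:ℝ)^(j'+1) * (-ξ) ≤ (2:ℝ)^j * (-ξ) := by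
        apply mul_le_mul_of_nonneg_right h21 (by linarith)
      rw [zpow_add₀ (by norm_num : (2:ℝ) ≠ 0)] at this
      nlinarith [h1.1, h2.2]
    · have : j + 1 ≤ j' := by omega
      have h21 : (2:ℝ)^(j+1) ≤ (2:ℝ)^j' := zpow_le_zpow_right₀ (by norm_num) this
      have : (2:ℝ)^(j+1) * (-ξ) ≤ (2:ℝ)^j' * (-ξ) := by
        apply mul_le_mul_of_nonneg_right h21 (by linarith)
      rw [zpow_add₀ (by norm_num : (2:ℝ) ≠ 0)] at this
      nlinarith [h2.1, h1.2]
  · obtain ⟨j, hj⟩ := exists_zpow_Ico hpos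
    refine ⟨j, Or.inl hj, fun j' hj' => ?_⟩
    have conv : ∀ i : ℤ, (2:ℝ)^i * ξ ∈ W0 → (2:ℝ)^i * ξ ∈ Set.Ico (1/2:ℝ) 1 := by
      intro i hi
      rcases hi with hi | hi
      · exact hi
      · exfalso; simp only [mem_Ico] at hi
        nlinarith [hi.2, zpow_pos (show (0:ℝ) < 2 by norm_num) i]
    exact zpow_unique_Ico hpos (conv _ hj') (conv _ (Or.inl hj))


-- ## surgery lemmas

lemma surgeryT {ι : Type*} (R : ι → Set ℝ) (m : ι → ℤ)
    (hsub : ∀ i, R i ⊆ W0)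
    (hdisj : ∀ i i' t, i ≠ i' → t ∈ R i → t ∈ R i' → False) (ξ : ℝ) :
    ∃! k : ℤ, ξ + (k:ℝ) ∈ (W0 \ ⋃ i, R i) ∪ ⋃ i, tr (m i) (R i) := by
  obtain ⟨k₀, hk₀, huniq⟩ := shannonT ξ
  have hcast : ∀ (a b : ℤ), ξ + ((a + b : ℤ):ℝ) - (b:ℝ) = ξ + a := by
    intro a b; push_cast; ring
  by_cases h : ξ + (k₀:ℝ) ∈ ⋃ i, R i
  · obtain ⟨i, hi⟩ := mem_iUnion.1 h
    refine ⟨k₀ + m i, Or.inr (mem_iUnion.2 ⟨i, ?_⟩), ?_⟩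
    · show (ξ + ((k₀ + m i : ℤ):ℝ)) - (m i : ℝ) ∈ R i
      rw [hcast]; exact hi
    · rintro k (hk | hk)
      · have hkk := huniq k hk.1
        rw [hkk] at hk
        exact absurd h hk.2
      · obtain ⟨i', hi'⟩ := mem_iUnion.1 hk
        have ht : ξ + ((k - m i' : ℤ):ℝ) ∈ R i' := by
          have : ξ + ((k - m i' : ℤ):ℝ) = (ξ + k) - (m i' : ℝ) := by push_cast; ring
          rw [this]; exact hi'
        have hk0' : k - m i' = k₀ := huniq _ (hsub i' ht)
        rw [hk0'] at ht
        have : i' = i := by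
          by_contra hne
          exact hdisj i' i _ hne ht hi
        rw [this] at hk0'
        omega
  · refine ⟨k₀, Or.inl ⟨hk₀, h⟩, ?_⟩
    rintro k (hk | hk)
    · exact huniq k hk.1
    · obtain ⟨i', hi'⟩ := mem_iUnion.1 hk
      have ht : ξ + ((k - m i' : ℤ):ℝ) ∈ R i' := by
        have : ξ + ((k - m i' : ℤ):ℝ) = (ξ + k) - (m i' : ℝ) := by push_cast; ring
        rw [this]; exact hi'
      have hk0' : k - m i' = k₀ := huniq _ (hsub i' ht)
      rw [hk0'] at ht
      exact absurd (mem_iUnion.2 ⟨i', ht⟩) h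

lemma zpow_shift (j p : ℤ) (ξ : ℝ) : (2:ℝ)^(-p) * ((2:ℝ)^j * ξ) = (2:ℝ)^(j - p) * ξ := by
  rw [← mul_assoc, ← zpow_add₀ (by norm_num : (2:ℝ) ≠ 0)]
  ring_nf

lemma surgeryD {ι : Type*} (R : ι → Set ℝ) (p : ι → ℤ)
    (hsub : ∀ i, R i ⊆ W0)
    (hdisj : ∀ i i' t, i ≠ i' → t ∈ R i → t ∈ R i' → False) (ξ : ℝ) (hξ : ξ ≠ 0) :
    ∃! j : ℤ, (2:ℝ)^j * ξ ∈ (W0 \ ⋃ i, R i) ∪ ⋃ i, dl (p i) (R i) := by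
  obtain ⟨j₀, hj₀, huniq⟩ := shannonD ξ hξ
  by_cases h : (2:ℝ)^j₀ * ξ ∈ ⋃ i, R i
  · obtain ⟨i, hi⟩ := mem_iUnion.1 h
    refine ⟨j₀ + p i, Or.inr (mem_iUnion.2 ⟨i, ?_⟩), ?_⟩
    · show (2:ℝ)^(-(p i)) * ((2:ℝ)^(j₀ + p i) * ξ) ∈ R i
      rw [zpow_shift]
      simpa using hi
    · rintro j (hj | hj)
      · have hjj := huniq j hj.1
        rw [hjj] at hj
        exact absurd h hj.2
      · obtain ⟨i', hi'⟩ := mem_iUnion.1 hj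
        rw [mem_dl, zpow_shift] at hi'
        have hj0' : j - p i' = j₀ := huniq _ (hsub i' hi')
        rw [hj0'] at hi'
        have : i' = i := by
          by_contra hne
          exact hdisj i' i _ hne hi' hi
        rw [this] at hj0'
        omega
  · refine ⟨j₀, Or.inl ⟨hj₀, h⟩, ?_⟩
    rintro j (hj | hj)
    · exact huniq j hj.1
    · obtain ⟨i', hi'⟩ := mem_iUnion.1 hj
      rw [mem_dl, zpow_shift] at hi'
      have hj0' : j - p i' = j₀ := huniq _ (hsub i' hi')
      rw [hj0'] at hi'
      exact absurd (mem_iUnion.2 ⟨i', hi'⟩) h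

-- ## margin lemmas : half-intervals can be translated/dilated into W0

lemma TmarginR (x : ℝ) : ∃ (k : ℤ) (w : ℝ), 0 < w ∧ w ≤ 1/4 ∧
    ∀ t, x < t → t < x + w → t + (k:ℝ) ∈ W0 := by
  obtain ⟨k, hk, -⟩ := shannonT x
  rcases hk with hk | hk <;> simp only [mem_Ico] at hk
  · refine ⟨k, min (1 - (x+k)) (1/4), lt_min (by linarith [hk.2]) (by norm_num), min_le_right _ _, ?_⟩
    intro t h1 h2
    refine Or.inl ⟨by linarith [hk.1], ?_⟩
    have := min_le_left (1 - (x+(k:ℝ))) (1/4)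
    linarith [h2, this]
  · refine ⟨k, min (-(1/2) - (x+k)) (1/4), lt_min (by linarith [hk.2]) (by norm_num), min_le_right _ _, ?_⟩
    intro t h1 h2
    refine Or.inr ⟨by linarith [hk.1], ?_⟩
    have := min_le_left (-(1/2) - (x+(k:ℝ))) (1/4)
    linarith [h2, this]

lemma TmarginL (x : ℝ) : ∃ (k : ℤ) (w : ℝ), 0 < w ∧ w ≤ 1/4 ∧
    ∀ t, x - w < t → t < x → t + (k:ℝ) ∈ W0 := by
  obtain ⟨k, hk, -⟩ := shannonT x
  rcases hk with hk | hk <;> simp only [mem_Ico] at hk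
  · rcases eq_or_lt_of_le hk.1 with heq | hlt
    · -- x + k = 1/2 : use k - 1
      refine ⟨k - 1, 1/4, by norm_num, le_refl _, ?_⟩
      intro t h1 h2
      refine Or.inr ⟨?_, ?_⟩ <;> push_cast <;> nlinarith [h1, h2]
    · refine ⟨k, min ((x+k) - 1/2) (1/4), lt_min (by linarith) (by norm_num), min_le_right _ _, ?_⟩
      intro t h1 h2
      have := min_le_left ((x+(k:ℝ)) - 1/2) (1/4)
      refine Or.inl ⟨by linarith [h1, this], by linarith [hk.2]⟩
  · rcases eq_or_lt_of_le hk.1 with heq | hlt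
    · -- x + k = -1 : use k + 2
      refine ⟨k + 2, 1/4, by norm_num, le_refl _, ?_⟩
      intro t h1 h2
      refine Or.inl ⟨?_, ?_⟩ <;> push_cast <;> nlinarith [h1, h2]
    · refine ⟨k, min ((x+k) + 1) (1/4), lt_min (by linarith) (by norm_num), min_le_right _ _, ?_⟩
      intro t h1 h2
      have := min_le_left ((x+(k:ℝ)) + 1) (1/4)
      refine Or.inr ⟨by linarith [h1, this], by linarith [hk.2]⟩

lemma DmarginR (x : ℝ) (hx : x ≠ 0) : ∃ (j : ℤ) (w : ℝ), 0 < w ∧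
    ∀ t, x < t → t < x + w → (2:ℝ)^j * t ∈ W0 := by
  rcases lt_or_gt_of_ne hx with hneg | hpos
  · obtain ⟨j, hj⟩ := exists_zpow_Ioc (show (0:ℝ) < -x by linarith)
    simp only [mem_Ioc] at hj
    have hy : (2:ℝ)^j * x ∈ Set.Ico (-1:ℝ) (-(1/2)) := by
      constructor <;> nlinarith [hj.1, hj.2]
    refine ⟨j, (-(1/2) - (2:ℝ)^j*x) * (2:ℝ)^(-j), ?_, ?_⟩
    · have := zpow_pos (show (0:ℝ) < 2 by norm_num) (-j)
      have h2 : (2:ℝ)^j * x < -(1/2) := hy.2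
      nlinarith
    · intro t h1 h2
      have hp := zpow_pos (show (0:ℝ) < 2 by norm_num) j
      have hq := zpow_pos (show (0:ℝ) < 2 by norm_num) (-j)
      have hmul : (2:ℝ)^j * (2:ℝ)^(-j) = 1 := by
        rw [← zpow_add₀ (by norm_num : (2:ℝ) ≠ 0)]; simp
      refine Or.inr ⟨by nlinarith [hy.1], by nlinarith [h2]⟩
  · obtain ⟨j, hj⟩ := exists_zpow_Ico hpos
    simp only [mem_Ico] at hj
    refine ⟨j, (1 - (2:ℝ)^j*x) * (2:ℝ)^(-j), ?_, ?_⟩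
    · have := zpow_pos (show (0:ℝ) < 2 by norm_num) (-j)
      nlinarith [hj.2]
    · intro t h1 h2
      have hp := zpow_pos (show (0:ℝ) < 2 by norm_num) j
      have hq := zpow_pos (show (0:ℝ) < 2 by norm_num) (-j)
      have hmul : (2:ℝ)^j * (2:ℝ)^(-j) = 1 := by
        rw [← zpow_add₀ (by norm_num : (2:ℝ) ≠ 0)]; simp
      refine Or.inl ⟨by nlinarith [hj.1], by nlinarith [h2]⟩

lemma DmarginL (x : ℝ) (hx : x ≠ 0) : ∃ (j : ℤ) (w : ℝ), 0 < w ∧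
    ∀ t, x - w < t → t < x → (2:ℝ)^j * t ∈ W0 := by
  rcases lt_or_gt_of_ne hx with hneg | hpos
  · obtain ⟨j, hj⟩ := exists_zpow_Ico (show (0:ℝ) < -x by linarith)
    simp only [mem_Ico] at hj
    have hy : (2:ℝ)^j * x ∈ Set.Ioc (-1:ℝ) (-(1/2)) := by
      constructor <;> nlinarith [hj.1, hj.2]
    refine ⟨j, ((2:ℝ)^j*x + 1) * (2:ℝ)^(-j), ?_, ?_⟩
    · have := zpow_pos (show (0:ℝ) < 2 by norm_num) (-j)
      nlinarith [hy.1]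
    · intro t h1 h2
      have hp := zpow_pos (show (0:ℝ) < 2 by norm_num) j
      have hq := zpow_pos (show (0:ℝ) < 2 by norm_num) (-j)
      have hmul : (2:ℝ)^j * (2:ℝ)^(-j) = 1 := by
        rw [← zpow_add₀ (by norm_num : (2:ℝ) ≠ 0)]; simp
      refine Or.inr ⟨by nlinarith [h1], by nlinarith [hy.2]⟩
  · obtain ⟨j, hj⟩ := exists_zpow_Ioc hpos
    simp only [mem_Ioc] at hj
    refine ⟨j, ((2:ℝ)^j*x - 1/2) * (2:ℝ)^(-j), ?_, ?_⟩
    · have := zpow_pos (show (0:ℝ) < 2 by norm_num) (-j)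
      nlinarith [hj.1]
    · intro t h1 h2
      have hp := zpow_pos (show (0:ℝ) < 2 by norm_num) j
      have hq := zpow_pos (show (0:ℝ) < 2 by norm_num) (-j)
      have hmul : (2:ℝ)^j * (2:ℝ)^(-j) = 1 := by
        rw [← zpow_add₀ (by norm_num : (2:ℝ) ≠ 0)]; simp
      refine Or.inl ⟨by nlinarith [h1], by nlinarith [hj.2]⟩

-- ## algebra of tr / dl, windows and bands

lemma tr_tr (m m' : ℤ) (S : Set ℝ) : tr m (tr m' S) = tr (m + m') S := by
  ext t
  simp only [mem_tr]
  have e : t - (m:ℝ) - (m':ℝ) = t - ((m + m' : ℤ):ℝ) := by push_cast; ring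
  rw [e]

lemma tr_cancel (m : ℤ) (S : Set ℝ) : tr (-m) (tr m S) = S := by
  rw [tr_tr]; simp [tr]

lemma dl_dl (p p' : ℤ) (S : Set ℝ) : dl p (dl p' S) = dl (p + p') S := by
  ext t
  simp only [mem_dl]
  rw [← mul_assoc, ← zpow_add₀ (by norm_num : (2:ℝ) ≠ 0)]
  have e : -p' + -p = -(p + p') := by ring
  rw [e]

lemma dl_cancel (p : ℤ) (S : Set ℝ) : dl (-p) (dl p S) = S := by
  rw [dl_dl]; simp [dl]

lemma tr_mono {S T : Set ℝ} (m : ℤ) (h : S ⊆ T) : tr m S ⊆ tr m T := fun _ ht => h ht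

lemma dl_mono {S T : Set ℝ} (p : ℤ) (h : S ⊆ T) : dl p S ⊆ dl p T := fun _ ht => h ht

lemma tr_Ico {a b : ℝ} (m : ℤ) : tr m (Set.Ico a b) = Set.Ico (a + m) (b + m) := by
  ext t; simp only [mem_tr, mem_Ico]
  constructor <;> intro h <;> constructor <;> linarith [h.1, h.2]

lemma dl_Ico {a b : ℝ} (p : ℤ) : dl p (Set.Ico a b) = Set.Ico ((2:ℝ)^p * a) ((2:ℝ)^p * b) := by
  ext t; simp only [mem_dl, mem_Ico]
  have hp := zpow_pos (show (0:ℝ) < 2 by norm_num) p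
  have hq := zpow_pos (show (0:ℝ) < 2 by norm_num) (-p)
  have hmul : (2:ℝ)^p * (2:ℝ)^(-p) = 1 := by
    rw [← zpow_add₀ (by norm_num : (2:ℝ) ≠ 0)]; simp
  have hmul' : (2:ℝ)^(-p) * (2:ℝ)^p = 1 := by
    rw [← zpow_add₀ (by norm_num : (2:ℝ) ≠ 0)]; simp
  constructor
  · rintro ⟨h1, h2⟩
    constructor
    · have h3 := mul_le_mul_of_nonneg_left h1 hp.le
      rw [← mul_assoc, hmul, one_mul] at h3; exact h3
    · have h3 := mul_lt_mul_of_pos_left h2 hp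
      rw [← mul_assoc, hmul, one_mul] at h3; exact h3
  · rintro ⟨h1, h2⟩
    constructor
    · have h3 := mul_le_mul_of_nonneg_left h1 hq.le
      rw [← mul_assoc, hmul', one_mul] at h3; exact h3
    · have h3 := mul_lt_mul_of_pos_left h2 hq
      rw [← mul_assoc, hmul', one_mul] at h3; exact h3

lemma measurable_tr {S : Set ℝ} (m : ℤ) (hS : MeasurableSet S) : MeasurableSet (tr m S) := by
  have : tr m S = (fun t : ℝ => t - (m:ℝ)) ⁻¹' S := rfl
  rw [this]
  exact hS.preimage (measurable_id.sub_const _)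

lemma measurable_dl {S : Set ℝ} (p : ℤ) (hS : MeasurableSet S) : MeasurableSet (dl p S) := by
  have : dl p S = (fun t : ℝ => (2:ℝ)^(-p) * t) ⁻¹' S := rfl
  rw [this]
  exact hS.preimage (measurable_id.const_mul _)

/-- signed windows of the Shannon set -/
def Wnd (s : Bool) : Set ℝ := if s then Set.Ico (1/2 : ℝ) 1 else Set.Ico (-1 : ℝ) (-(1/2))

lemma Wnd_subset_W0 (s : Bool) : Wnd s ⊆ W0 := by
  cases s <;> simp only [Wnd, if_true, if_false, Bool.false_eq_true] <;>
    intro t ht <;> [exact Or.inr ht; exact Or.inl ht]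

def usign (s : Bool) : ℤ := if s then -1 else 1

/-- bands accumulating at ±1 -/
def Bnd (s : Bool) (N : ℕ) : Set ℝ :=
  if s then Set.Ico (1 - (2:ℝ)^(-(N:ℤ))) (1 - (2:ℝ)^(-(N:ℤ))/2)
  else Set.Ico ((2:ℝ)^(-(N:ℤ))/2 - 1) ((2:ℝ)^(-(N:ℤ)) - 1)

lemma Bnd_subset_Wnd {s : Bool} {N : ℕ} (hN : 1 ≤ N) : Bnd s N ⊆ Wnd s := by
  have h1 : (2:ℝ)^(-(N:ℤ)) ≤ 1/2 := by
    have : (-(N:ℤ)) ≤ -1 := by omega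
    calc (2:ℝ)^(-(N:ℤ)) ≤ (2:ℝ)^(-1:ℤ) := zpow_le_zpow_right₀ (by norm_num) this
      _ = 1/2 := by norm_num
  have h2 : (0:ℝ) < (2:ℝ)^(-(N:ℤ)) := zpow_pos (by norm_num) _
  cases s <;> simp only [Bnd, Wnd, if_true, if_false, Bool.false_eq_true] <;>
    intro t ht <;> simp only [mem_Ico] at ht ⊢ <;> constructor <;> linarith [ht.1, ht.2]

/-- the key step of the K-side chains -/
lemma stepC {S : Set ℝ} {s : Bool} (hS : S ⊆ Wnd s) (N : ℕ) :
    tr (usign s) (dl (-(N:ℤ)) S) ⊆ Bnd (!s) N := by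
  have h2 : (0:ℝ) < (2:ℝ)^(-(N:ℤ)) := zpow_pos (by norm_num) _
  cases s
  · -- S ⊆ [-1, -1/2) ; dilate to [-2^{-N}, -2^{-N}/2) ; translate by +1
    simp only [Wnd, if_false, Bool.false_eq_true] at hS
    have hdl : dl (-(N:ℤ)) S ⊆ Set.Ico ((2:ℝ)^(-(N:ℤ)) * (-1)) ((2:ℝ)^(-(N:ℤ)) * (-(1/2))) := by
      rw [← dl_Ico]; exact dl_mono _ hS
    have htr := tr_mono (S := dl (-(N:ℤ)) S) (usign false) hdl
    refine htr.trans ?_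
    rw [tr_Ico]
    simp only [Bnd, Bool.not_false, if_true]
    intro t ht; simp only [mem_Ico] at ht ⊢
    simp only [usign, if_false, Bool.false_eq_true] at ht
    push_cast at ht
    constructor <;> nlinarith [ht.1, ht.2]
  · simp only [Wnd, if_true] at hS
    have hdl : dl (-(N:ℤ)) S ⊆ Set.Ico ((2:ℝ)^(-(N:ℤ)) * (1/2)) ((2:ℝ)^(-(N:ℤ)) * 1) := by
      rw [← dl_Ico]; exact dl_mono _ hS
    have htr := tr_mono (S := dl (-(N:ℤ)) S) (usign true) hdl
    refine htr.trans ?_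
    rw [tr_Ico]
    simp only [Bnd, Bool.not_true, if_false, Bool.false_eq_true]
    intro t ht; simp only [mem_Ico] at ht ⊢
    simp only [usign, if_true] at ht
    push_cast at ht
    constructor <;> nlinarith [ht.1, ht.2]

lemma Bnd_disjoint {s s' : Bool} {N N' : ℕ} (h : ¬ (s = s' ∧ N = N')) (hN : 1 ≤ N) (hN' : 1 ≤ N') :
    ∀ t, t ∈ Bnd s N → t ∈ Bnd s' N' → False := by
  intro t ht ht'
  have key : ∀ (M : ℕ), 1 ≤ M → ∀ u, u ∈ Bnd true M → 1 - (2:ℝ)^(-(M:ℤ)) ≤ u ∧ u < 1 - (2:ℝ)^(-(M:ℤ))/2 := by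
    intro M _ u hu; simpa only [Bnd, if_true, mem_Ico] using hu
  have keyf : ∀ (M : ℕ), 1 ≤ M → ∀ u, u ∈ Bnd false M → (2:ℝ)^(-(M:ℤ))/2 - 1 ≤ u ∧ u < (2:ℝ)^(-(M:ℤ)) - 1 := by
    intro M _ u hu; simpa only [Bnd, if_false, Bool.false_eq_true, mem_Ico] using hu
  have hposW : ∀ (M:ℕ), 1 ≤ M → (0:ℝ) < (2:ℝ)^(-(M:ℤ)) ∧ (2:ℝ)^(-(M:ℤ)) ≤ 1/2 := by
    intro M hM
    refine ⟨zpow_pos (by norm_num) _, ?_⟩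
    calc (2:ℝ)^(-(M:ℤ)) ≤ (2:ℝ)^(-1:ℤ) := zpow_le_zpow_right₀ (by norm_num) (by omega)
      _ = 1/2 := by norm_num
  have hmono : ∀ (M M' : ℕ), M < M' → (2:ℝ)^(-(M':ℤ)) ≤ (2:ℝ)^(-(M:ℤ))/2 := by
    intro M M' hMM
    have : (-(M':ℤ)) ≤ -(M:ℤ) - 1 := by omega
    calc (2:ℝ)^(-(M':ℤ)) ≤ (2:ℝ)^(-(M:ℤ)-1) := zpow_le_zpow_right₀ (by norm_num) this
      _ = (2:ℝ)^(-(M:ℤ))/2 := by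
          rw [zpow_sub₀ (by norm_num : (2:ℝ) ≠ 0)]; norm_num
  cases s <;> cases s'
  · -- both false
    have hNN : N ≠ N' := by tauto
    have h1 := keyf N hN t ht
    have h2 := keyf N' hN' t ht'
    rcases Nat.lt_or_ge N N' with hl | hl
    · have := hmono N N' hl; linarith [h1.1, h2.2]
    · have hl' : N' < N := by omega
      have := hmono N' N hl'; linarith [h2.1, h1.2]
  · -- false / true : negative vs positive regions
    have h1 := keyf N hN t ht
    have h2 := key N' hN' t ht'
    have := (hposW N hN).2
    have := (hposW N' hN').2
    linarith [h1.2, h2.1]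
  · have h1 := key N hN t ht
    have h2 := keyf N' hN' t ht'
    have := (hposW N hN).2
    have := (hposW N' hN').2
    linarith [h1.1, h2.2]
  · have hNN : N ≠ N' := by tauto
    have h1 := key N hN t ht
    have h2 := key N' hN' t ht'
    rcases Nat.lt_or_ge N N' with hl | hl
    · have := hmono N N' hl; linarith [h1.2, h2.1]
    · have hl' : N' < N := by omega
      have := hmono N' N hl'; linarith [h2.2, h1.1]

lemma Bnd_far {s : Bool} {N N₀ : ℕ} (h : N₀ < N) {t : ℝ} (ht : t ∈ Bnd s N) :
    1 - (2:ℝ)^(-(N₀:ℤ))/2 ≤ |t| := by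
  have hmono : (2:ℝ)^(-(N:ℤ)) ≤ (2:ℝ)^(-(N₀:ℤ))/2 := by
    have : (-(N:ℤ)) ≤ -(N₀:ℤ) - 1 := by omega
    calc (2:ℝ)^(-(N:ℤ)) ≤ (2:ℝ)^(-(N₀:ℤ)-1) := zpow_le_zpow_right₀ (by norm_num) this
      _ = (2:ℝ)^(-(N₀:ℤ))/2 := by
          rw [zpow_sub₀ (by norm_num : (2:ℝ) ≠ 0)]; norm_num
  have hp : (0:ℝ) < (2:ℝ)^(-(N₀:ℤ)) := zpow_pos (by norm_num) _
  have hpN : (0:ℝ) < (2:ℝ)^(-(N:ℤ)) := zpow_pos (by norm_num) _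
  have hle1 : (2:ℝ)^(-(N₀:ℤ)) ≤ 1 := by
    calc (2:ℝ)^(-(N₀:ℤ)) ≤ (2:ℝ)^(0:ℤ) := zpow_le_zpow_right₀ (by norm_num) (by omega)
      _ = 1 := by norm_num
  cases s <;> simp only [Bnd, if_true, if_false, Bool.false_eq_true, mem_Ico] at ht
  · rw [abs_of_nonpos (by linarith [ht.2, hmono, hle1])]
    linarith [ht.2, hmono]
  · rw [abs_of_nonneg (by linarith [ht.1, hmono, hle1])]
    linarith [ht.1, hmono]

-- ## the two chain constructions

def sgn (s0 : Bool) (k : ℕ) : Bool := if k % 2 = 0 then s0 else !s0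

lemma sgn_succ (s0 : Bool) (k : ℕ) : sgn s0 (k+1) = ! sgn s0 k := by
  rcases Nat.even_or_odd k with h | h
  · have h2 : k % 2 = 0 := Nat.even_iff.1 h
    have h3 : (k+1) % 2 = 1 := by omega
    simp [sgn, h2, h3]
  · have h2 : k % 2 = 1 := Nat.odd_iff.1 h
    have h3 : (k+1) % 2 = 0 := by omega
    simp [sgn, h2, h3]

/-- K-side chain: remove a translated copy into W0, then keep exchanging:
dilate down towards 0, translate back into W0 near ±1, with absorption of
the parts meeting the J-family `JU`. -/
def chainC (JU K0 : Set ℝ) (s0 : Bool) (N : ℕ → ℕ) : ℕ → Set ℝ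
  | 0 => K0
  | (k+1) => tr (usign (sgn s0 k)) (dl (-(N (k+1):ℤ)) (chainC JU K0 s0 N k \ JU))

lemma chainC_band (JU K0 : Set ℝ) (s0 : Bool) (N : ℕ → ℕ)
    (hK0 : K0 ⊆ Wnd s0) (hN : ∀ k, 1 ≤ N k) :
    ∀ k, chainC JU K0 s0 N k ⊆ Wnd (sgn s0 k) ∧
      (1 ≤ k → chainC JU K0 s0 N k ⊆ Bnd (sgn s0 k) (N k)) := by
  intro k
  induction k with
  | zero =>
      refine ⟨?_, by omega⟩
      have : sgn s0 0 = s0 := by simp [sgn]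
      rw [this]; exact hK0
  | succ k ih =>
      have hsub : chainC JU K0 s0 N k \ JU ⊆ Wnd (sgn s0 k) :=
        (diff_subset).trans ih.1
      have hband : chainC JU K0 s0 N (k+1) ⊆ Bnd (! sgn s0 k) (N (k+1)) := by
        show tr (usign (sgn s0 k)) (dl (-(N (k+1):ℤ)) (chainC JU K0 s0 N k \ JU)) ⊆ _
        exact (tr_mono _ (dl_mono _ hsub)).trans (stepC (fun _ h => h) (N (k+1)))
      rw [← sgn_succ] at hband
      exact ⟨hband.trans (Bnd_subset_Wnd (hN (k+1))), fun _ => hband⟩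

/-- J-side chain: translate far away, dilate back into W0 in controlled bands
just above `aa`. -/
def chainG (TU J0 : Set ℝ) (M : ℕ → ℤ) (mm : ℕ → ℕ) : ℕ → Set ℝ
  | 0 => J0 \ TU
  | (k+1) => dl (-(mm (k+1):ℤ)) (tr (M (k+1)) (chainG TU J0 M mm k))

/-- bands above aa -/
def JB (aa : ℝ) (m : ℕ) : Set ℝ :=
  Set.Ico (aa + (2:ℝ)^(-(m:ℤ))) (aa + 3 * (2:ℝ)^(-(m:ℤ)))

lemma stepG {S : Set ℝ} (hS : S ⊆ Set.Ico (-1 : ℝ) 1) {M : ℤ} {m : ℕ} {aa : ℝ}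
    (hM : (M:ℝ) = (2:ℝ)^(m:ℤ) * aa + 2) :
    dl (-(m:ℤ)) (tr M S) ⊆ JB aa m := by
  have h1 : tr M S ⊆ Set.Ico ((-1 : ℝ) + M) (1 + M) := by
    rw [← tr_Ico]; exact tr_mono _ hS
  have h2 := dl_mono (-(m:ℤ)) h1
  refine h2.trans ?_
  rw [dl_Ico]
  have hmul : (2:ℝ)^(-(m:ℤ)) * (2:ℝ)^((m:ℤ)) = 1 := by
    rw [← zpow_add₀ (by norm_num : (2:ℝ) ≠ 0)]; simp
  have e1 : (2:ℝ)^(-(m:ℤ)) * ((-1) + M) = aa + (2:ℝ)^(-(m:ℤ)) := by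
    rw [hM]
    have h1 : (-1 : ℝ) + ((2:ℝ)^(m:ℤ) * aa + 2) = (2:ℝ)^(m:ℤ) * aa + 1 := by ring
    rw [h1, mul_add, ← mul_assoc, hmul, one_mul, mul_one, add_comm]
  have e2 : (2:ℝ)^(-(m:ℤ)) * (1 + M) = aa + 3 * (2:ℝ)^(-(m:ℤ)) := by
    rw [hM]
    have h1 : (1 : ℝ) + ((2:ℝ)^(m:ℤ) * aa + 2) = (2:ℝ)^(m:ℤ) * aa + 3 := by ring
    rw [h1, mul_add, ← mul_assoc, hmul, one_mul]
    ring
  rw [e1, e2]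
  exact fun t ht => ht

lemma JB_subset {aa : ℝ} {m : ℕ} (haa : 0 < aa) (h3 : aa + 3 * (2:ℝ)^(-(m:ℤ)) ≤ 1) :
    JB aa m ⊆ Set.Ico (-1:ℝ) 1 := by
  intro t ht
  have hp : (0:ℝ) < (2:ℝ)^(-(m:ℤ)) := zpow_pos (by norm_num) _
  simp only [JB, mem_Ico] at ht ⊢
  constructor <;> linarith [ht.1, ht.2]

lemma chainG_band (TU J0 : Set ℝ) (M : ℕ → ℤ) (mm : ℕ → ℕ) {aa : ℝ}
    (hJ0 : J0 ⊆ Set.Ico (-1:ℝ) 1) (haa : 0 < aa)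
    (hM : ∀ k, 1 ≤ k → (M k : ℝ) = (2:ℝ)^((mm k : ℕ):ℤ) * aa + 2)
    (h3 : ∀ k, 1 ≤ k → aa + 3 * (2:ℝ)^(-((mm k : ℕ):ℤ)) ≤ 1) :
    ∀ k, chainG TU J0 M mm k ⊆ Set.Ico (-1:ℝ) 1 ∧
      (1 ≤ k → chainG TU J0 M mm k ⊆ JB aa (mm k)) := by
  intro k
  induction k with
  | zero =>
      exact ⟨(diff_subset).trans hJ0, by omega⟩
  | succ k ih =>
      have hband : chainG TU J0 M mm (k+1) ⊆ JB aa (mm (k+1)) := by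
        show dl (-(mm (k+1):ℤ)) (tr (M (k+1)) (chainG TU J0 M mm k)) ⊆ _
        exact (dl_mono _ (tr_mono _ ih.1)).trans
          (by
            have := stepG (S := Set.Ico (-1:ℝ) 1) (fun _ h => h) (hM (k+1) (by omega))
            exact fun t ht => this ht)
      exact ⟨hband.trans (JB_subset haa (h3 (k+1) (by omega))), fun _ => hband⟩

lemma JB_disjoint {aa : ℝ} {m m' : ℕ} (h : m + 2 ≤ m') :
    ∀ t, t ∈ JB aa m → t ∈ JB aa m' → False := by
  intro t ht ht'
  simp only [JB, mem_Ico] at ht ht'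
  have : (2:ℝ)^(-(m':ℤ)) ≤ (2:ℝ)^(-(m:ℤ)-2) := by
    apply zpow_le_zpow_right₀ (by norm_num); omega
  have e : (2:ℝ)^(-(m:ℤ)-2) = (2:ℝ)^(-(m:ℤ))/4 := by
    rw [zpow_sub₀ (by norm_num : (2:ℝ) ≠ 0)]; norm_num
  rw [e] at this
  linarith [ht.1, ht'.2]

-- ## finite-set helpers

lemma finite_gap {S : Set ℝ} (h : S.Finite) :
    ∃ γ > 0, ∀ u ∈ S, ∀ v ∈ S, u ≠ v → γ ≤ |u - v| := by
  classical
  set F := h.toFinset with hF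
  set D : Finset ℝ := ((F ×ˢ F).filter (fun p => p.1 ≠ p.2)).image
    (fun p => |p.1 - p.2|) with hD
  by_cases hne : D.Nonempty
  · refine ⟨D.min' hne, ?_, ?_⟩
    · obtain ⟨⟨u, v⟩, hmem, he⟩ := Finset.mem_image.1 (D.min'_mem hne)
      have huv := (Finset.mem_filter.1 hmem).2
      rw [← he]
      exact abs_pos.2 (sub_ne_zero.2 huv)
    · intro u hu v hv huv
      apply D.min'_le
      exact Finset.mem_image.2 ⟨(u, v), Finset.mem_filter.2
        ⟨Finset.mem_product.2 ⟨h.mem_toFinset.2 hu, h.mem_toFinset.2 hv⟩, huv⟩, rfl⟩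
  · refine ⟨1, by norm_num, ?_⟩
    intro u hu v hv huv
    exfalso
    apply hne
    exact ⟨|u - v|, Finset.mem_image.2 ⟨(u, v), Finset.mem_filter.2
      ⟨Finset.mem_product.2 ⟨h.mem_toFinset.2 hu, h.mem_toFinset.2 hv⟩, huv⟩, rfl⟩⟩

lemma exists_small_pow {c : ℝ} (hc : 0 < c) : ∃ n : ℕ, 1 ≤ n ∧ (2:ℝ)^(-(n:ℤ)) ≤ c := by
  obtain ⟨n, hn⟩ := exists_pow_lt_of_lt_one hc (by norm_num : (1/2:ℝ) < 1)
  refine ⟨n + 1, by omega, ?_⟩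
  have e : (2:ℝ)^(-((n+1:ℕ):ℤ)) = (1/2:ℝ)^(n+1) := by
    rw [zpow_neg, zpow_natCast, one_div, inv_pow]
  rw [e]
  calc (1/2:ℝ)^(n+1) ≤ (1/2:ℝ)^n := by
        apply pow_le_pow_of_le_one (by norm_num) (by norm_num); omega
    _ ≤ c := le_of_lt hn

lemma avoid_finite {S : Set ℝ} (h : S.Finite) :
    ∃ r : ℕ, 3 ≤ r ∧ (1/2 + (2:ℝ)^(-(r:ℤ))) ∉ S := by
  by_contra hcon
  push_neg at hcon
  have hmem : ∀ i : ℕ, (1/2 + (2:ℝ)^(-((i+3:ℕ):ℤ))) ∈ S := fun i => hcon (i+3) (by omega)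
  have hinj : Function.Injective (fun i : ℕ => 1/2 + (2:ℝ)^(-((i+3:ℕ):ℤ))) := by
    intro i j hij
    simp only at hij
    have h2 : (2:ℝ)^(-((i+3:ℕ):ℤ)) = (2:ℝ)^(-((j+3:ℕ):ℤ)) := by linarith
    by_contra hne
    rcases Nat.lt_or_ge i j with hl | hl
    · have : (2:ℝ)^(-((j+3:ℕ):ℤ)) < (2:ℝ)^(-((i+3:ℕ):ℤ)) := by
        apply zpow_lt_zpow_right₀ (by norm_num : (1:ℝ) < 2); omega
      linarith
    · have hl' : j < i := by omega
      have : (2:ℝ)^(-((i+3:ℕ):ℤ)) < (2:ℝ)^(-((j+3:ℕ):ℤ)) := by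
        apply zpow_lt_zpow_right₀ (by norm_num : (1:ℝ) < 2); omega
      linarith
  exact (Set.infinite_of_injective_forall_mem hinj hmem) h

-- ## choice data for translation / dilation representatives

lemma DmarginR' (x : ℝ) : ∃ (j : ℤ) (w : ℝ), 0 < w ∧
    ∀ t, x ≠ 0 → x < t → t < x + w → (2:ℝ)^j * t ∈ W0 := by
  by_cases hx : x = 0
  · exact ⟨0, 1, one_pos, fun t h => absurd hx h⟩
  · obtain ⟨j, w, hw, h⟩ := DmarginR x hx
    exact ⟨j, w, hw, fun t _ => h t⟩

lemma DmarginL' (x : ℝ) : ∃ (j : ℤ) (w : ℝ), 0 < w ∧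
    ∀ t, x ≠ 0 → x - w < t → t < x → (2:ℝ)^j * t ∈ W0 := by
  by_cases hx : x = 0
  · exact ⟨0, 1, one_pos, fun t h => absurd hx h⟩
  · obtain ⟨j, w, hw, h⟩ := DmarginL x hx
    exact ⟨j, w, hw, fun t _ => h t⟩

def kR (x : ℝ) : ℤ := (TmarginR x).choose
def wR (x : ℝ) : ℝ := (TmarginR x).choose_spec.choose
lemma wR_pos (x : ℝ) : 0 < wR x := (TmarginR x).choose_spec.choose_spec.1
lemma hKR (x : ℝ) : ∀ t, x < t → t < x + wR x → t + (kR x : ℝ) ∈ W0 :=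
  (TmarginR x).choose_spec.choose_spec.2.2

def kL (x : ℝ) : ℤ := (TmarginL x).choose
def wL (x : ℝ) : ℝ := (TmarginL x).choose_spec.choose
lemma wL_pos (x : ℝ) : 0 < wL x := (TmarginL x).choose_spec.choose_spec.1
lemma hKL (x : ℝ) : ∀ t, x - wL x < t → t < x → t + (kL x : ℝ) ∈ W0 :=
  (TmarginL x).choose_spec.choose_spec.2.2

def jR (x : ℝ) : ℤ := (DmarginR' x).choose
def wDR (x : ℝ) : ℝ := (DmarginR' x).choose_spec.choose
lemma wDR_pos (x : ℝ) : 0 < wDR x := (DmarginR' x).choose_spec.choose_spec.1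
lemma hJR (x : ℝ) : ∀ t, x ≠ 0 → x < t → t < x + wDR x → (2:ℝ)^(jR x) * t ∈ W0 :=
  (DmarginR' x).choose_spec.choose_spec.2

def jL (x : ℝ) : ℤ := (DmarginL' x).choose
def wDL (x : ℝ) : ℝ := (DmarginL' x).choose_spec.choose
lemma wDL_pos (x : ℝ) : 0 < wDL x := (DmarginL' x).choose_spec.choose_spec.1
lemma hJL (x : ℝ) : ∀ t, x ≠ 0 → x - wDL x < t → t < x → (2:ℝ)^(jL x) * t ∈ W0 :=
  (DmarginL' x).choose_spec.choose_spec.2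

def k0 (x : ℝ) (b : Bool) : ℤ := if b then kR x else kL x
def j0 (x : ℝ) (b : Bool) : ℤ := if b then jR x else jL x
def wT (x : ℝ) (b : Bool) : ℝ := if b then wR x else wL x
def wD (x : ℝ) (b : Bool) : ℝ := if b then wDR x else wDL x
def tmark (x : ℝ) (b : Bool) : ℝ := x + (k0 x b : ℝ)
def dmark (x : ℝ) (b : Bool) : ℝ := (2:ℝ)^(j0 x b) * x
def s0 (x : ℝ) (b : Bool) : Bool := decide (0 < tmark x b)

lemma wT_pos (x : ℝ) (b : Bool) : 0 < wT x b := by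
  cases b <;> simp [wT, wR_pos, wL_pos]
lemma wD_pos (x : ℝ) (b : Bool) : 0 < wD x b := by
  cases b <;> simp [wD, wDR_pos, wDL_pos]

-- ## the configuration

structure Cfg where
  X : Set ℝ
  eps : ℝ → ℝ
  nidx : ℝ → ℕ
  nn : ℕ
  N0 : ℕ
  m0 : ℕ
  r0 : ℕ

namespace Cfg

variable (c : Cfg)

def aa : ℝ := 1/2 + (2:ℝ)^(-(c.r0:ℤ))

def Hset (x : ℝ) (b : Bool) : Set ℝ :=
  if x ∈ c.X then (if b then Set.Ioo x (x + c.eps x) else Set.Ioo (x - c.eps x) x) else ∅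

def Kset (x : ℝ) (b : Bool) : Set ℝ := tr (k0 x b) (c.Hset x b)
def Jset (x : ℝ) (b : Bool) : Set ℝ := dl (j0 x b) (c.Hset x b)
def JU : Set ℝ := ⋃ x, ⋃ b, c.Jset x b
def NN (x : ℝ) (b : Bool) (k : ℕ) : ℕ :=
  c.N0 + 1 + 2*(c.nn*k + c.nidx x) + (if b then 1 else 0)
def mf (x : ℝ) (b : Bool) (k : ℕ) : ℕ :=
  c.m0 + 2*(2*(c.nn*k + c.nidx x) + (if b then 1 else 0))
def MM (x : ℝ) (b : Bool) (k : ℕ) : ℤ :=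
  2^(c.mf x b k - 1) + 2^(c.mf x b k - c.r0) + 2
def CC (x : ℝ) (b : Bool) : ℕ → Set ℝ :=
  chainC c.JU (c.Kset x b) (s0 x b) (c.NN x b)
def TU : Set ℝ := ⋃ x, ⋃ b, ⋃ k, c.CC x b k
def GG (x : ℝ) (b : Bool) : ℕ → Set ℝ :=
  chainG c.TU (c.Jset x b) (c.MM x b) (c.mf x b)

end Cfg

/-- index type for the removed family -/
def Idx : Type := ((ℝ × Bool) × ℕ × Option (ℝ × Bool)) ⊕ ((ℝ × Bool) × ℕ)

namespace Cfg

variable (c : Cfg)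

def Rem : Idx → Set ℝ
  | .inl ((x,b),k,some (y,c')) => c.CC x b k ∩ c.Jset y c'
  | .inl ((x,b),k,none) => c.CC x b k \ c.JU
  | .inr ((x,b),k) => c.GG x b k

def mT : Idx → ℤ
  | .inl ((x,b),0,_) => -(k0 x b)
  | .inl ((x,b),(Nat.succ k),_) => -(usign (sgn (s0 x b) k))
  | .inr ((x,b),k) => c.MM x b (k+1)

def pD : Idx → ℤ
  | .inl (_,_,some (y,c')) => -(j0 y c')
  | .inl ((x,b),k,none) => -((c.NN x b (k+1) : ℤ))
  | .inr ((x,b),0) => -(j0 x b)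
  | .inr ((x,b),(Nat.succ k)) => ((c.mf x b (k+1) : ℤ))

/-- the constructed wavelet set (up to the finite set X itself) -/
def Wcon : Set ℝ := (W0 \ ⋃ i, c.Rem i) ∪ ⋃ i, tr (c.mT i) (c.Rem i)

end Cfg

/-- all conditions needed about a configuration -/
structure Good (c : Cfg) : Prop where
  fin : c.X.Finite
  notint : ∀ x ∈ c.X, ∀ n : ℤ, x ≠ (n:ℝ)
  epos : ∀ x ∈ c.X, 0 < c.eps x
  e14 : ∀ x ∈ c.X, c.eps x ≤ 1/4
  eT : ∀ x ∈ c.X, ∀ b, c.eps x < wT x b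
  eD : ∀ x ∈ c.X, ∀ b, c.eps x < wD x b
  markinjT : ∀ x ∈ c.X, ∀ y ∈ c.X, ∀ b b', x ≠ y → tmark x b ≠ tmark y b'
  markinjD : ∀ x ∈ c.X, ∀ y ∈ c.X, ∀ b b', x ≠ y → dmark x b ≠ dmark y b'
  gapT : ∀ x ∈ c.X, ∀ y ∈ c.X, ∀ b b', tmark x b ≠ tmark y b' →
    c.eps x + c.eps y ≤ |tmark x b - tmark y b'|
  gapD : ∀ x ∈ c.X, ∀ y ∈ c.X, ∀ b b', dmark x b ≠ dmark y b' →
    (2:ℝ)^(j0 x b)*c.eps x + (2:ℝ)^(j0 y b')*c.eps y ≤ |dmark x b - dmark y b'|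
  tau1 : ∀ x ∈ c.X, ∀ b, |tmark x b| + c.eps x < 1 - (2:ℝ)^(-(c.N0:ℤ))/2
  KJB : ∀ x ∈ c.X, ∀ b, tmark x b + c.eps x ≤ c.aa ∨
    c.aa + 3*(2:ℝ)^(-(c.m0:ℤ)) ≤ tmark x b - c.eps x
  JJB : ∀ x ∈ c.X, ∀ b, dmark x b + (2:ℝ)^(j0 x b)*c.eps x ≤ c.aa ∨
    c.aa + 3*(2:ℝ)^(-(c.m0:ℤ)) ≤ dmark x b - (2:ℝ)^(j0 x b)*c.eps x
  aa34 : c.aa + 3*(2:ℝ)^(-(c.m0:ℤ)) ≤ 3/4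
  N03 : 3 ≤ c.N0
  m0r0 : c.r0 ≤ c.m0
  r03 : 3 ≤ c.r0
  nidxinj : ∀ x ∈ c.X, ∀ y ∈ c.X, x ≠ y → c.nidx x ≠ c.nidx y
  nidxlt : ∀ x ∈ c.X, c.nidx x < c.nn
  nn1 : 1 ≤ c.nn

-- ## basic facts under Good

lemma tr_empty (m : ℤ) : tr m (∅ : Set ℝ) = ∅ := by
  ext t; simp [mem_tr]

lemma dl_empty (p : ℤ) : dl p (∅ : Set ℝ) = ∅ := by
  ext t; simp [mem_dl]

lemma tr_Ioo {a b : ℝ} (m : ℤ) : tr m (Set.Ioo a b) = Set.Ioo (a + m) (b + m) := by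
  ext t; simp only [mem_tr, mem_Ioo]
  constructor <;> intro h <;> constructor <;> linarith [h.1, h.2]

lemma dl_Ioo {a b : ℝ} (p : ℤ) : dl p (Set.Ioo a b) = Set.Ioo ((2:ℝ)^p * a) ((2:ℝ)^p * b) := by
  ext t; simp only [mem_dl, mem_Ioo]
  have hp := zpow_pos (show (0:ℝ) < 2 by norm_num) p
  have hq := zpow_pos (show (0:ℝ) < 2 by norm_num) (-p)
  have hmul : (2:ℝ)^p * (2:ℝ)^(-p) = 1 := by
    rw [← zpow_add₀ (by norm_num : (2:ℝ) ≠ 0)]; simp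
  have hmul' : (2:ℝ)^(-p) * (2:ℝ)^p = 1 := by
    rw [← zpow_add₀ (by norm_num : (2:ℝ) ≠ 0)]; simp
  constructor
  · rintro ⟨h1, h2⟩
    constructor
    · have h3 := mul_lt_mul_of_pos_left h1 hp
      rw [← mul_assoc, hmul, one_mul] at h3; exact h3
    · have h3 := mul_lt_mul_of_pos_left h2 hp
      rw [← mul_assoc, hmul, one_mul] at h3; exact h3
  · rintro ⟨h1, h2⟩
    constructor
    · have h3 := mul_lt_mul_of_pos_left h1 hq
      rw [← mul_assoc, hmul', one_mul] at h3; exact h3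
    · have h3 := mul_lt_mul_of_pos_left h2 hq
      rw [← mul_assoc, hmul', one_mul] at h3; exact h3

lemma W0_sub_Ico : W0 ⊆ Set.Ico (-1 : ℝ) 1 := by
  intro t ht
  have := W0_bounds ht
  exact ⟨this.1, this.2⟩

namespace Cfg

variable {c : Cfg}

lemma Hset_empty (x : ℝ) (b : Bool) (hx : x ∉ c.X) : c.Hset x b = ∅ := by
  simp [Hset, hx]

lemma Hset_sub (x : ℝ) (b : Bool) (hε : 0 ≤ c.eps x) :
    c.Hset x b ⊆ Set.Ioo (x - c.eps x) (x + c.eps x) := by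
  by_cases hx : x ∈ c.X
  · cases b <;> simp only [Hset, hx, if_true, if_false, Bool.false_eq_true] <;>
      intro t ht <;> simp only [mem_Ioo] at ht ⊢ <;> constructor <;>
      first
        | linarith [ht.1, ht.2]
        | linarith [ht.1, ht.2, hε]
  · simp [Hset, hx]

lemma Kset_amb (g : Good c) (x : ℝ) (b : Bool) :
    c.Kset x b ⊆ Set.Ioo (tmark x b - c.eps x) (tmark x b + c.eps x) := by
  by_cases hx : x ∈ c.X
  · have h := Hset_sub (c := c) x b (le_of_lt (g.epos x hx))
    intro t ht
    have := h ht
    simp only [mem_Ioo, tmark] at this ⊢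
    constructor <;> [linarith [this.1]; linarith [this.2]]
  · intro t ht
    rw [show c.Kset x b = tr (k0 x b) (c.Hset x b) from rfl, Hset_empty x b hx, tr_empty] at ht
    exact absurd ht (notMem_empty t)

lemma Jset_amb (g : Good c) (x : ℝ) (b : Bool) :
    c.Jset x b ⊆ Set.Ioo (dmark x b - (2:ℝ)^(j0 x b) * c.eps x)
      (dmark x b + (2:ℝ)^(j0 x b) * c.eps x) := by
  by_cases hx : x ∈ c.X
  · have h := Hset_sub (c := c) x b (le_of_lt (g.epos x hx))
    have h2 := dl_mono (j0 x b) h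
    rw [dl_Ioo] at h2
    intro t ht
    have := h2 ht
    simp only [mem_Ioo, dmark] at this ⊢
    constructor <;> nlinarith [this.1, this.2]
  · intro t ht
    rw [show c.Jset x b = dl (j0 x b) (c.Hset x b) from rfl, Hset_empty x b hx, dl_empty] at ht
    exact absurd ht (notMem_empty t)

lemma Kset_sub_W0 (g : Good c) (x : ℝ) (b : Bool) : c.Kset x b ⊆ W0 := by
  by_cases hx : x ∈ c.X
  · intro t ht
    have ht' : t - (k0 x b : ℝ) ∈ c.Hset x b := ht
    cases b
    · simp only [Hset, hx, if_true, if_false, Bool.false_eq_true, mem_Ioo] at ht'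
      have := hKL x (t - (k0 x false : ℝ))
        (by have := g.eT x hx false; simp only [wT, if_false, Bool.false_eq_true] at this
            linarith [ht'.1])
        ht'.2
      simpa [k0] using this
    · simp only [Hset, hx, if_true, mem_Ioo] at ht'
      have := hKR x (t - (k0 x true : ℝ)) ht'.1
        (by have := g.eT x hx true; simp only [wT, if_true] at this
            linarith [ht'.2])
      simpa [k0] using this
  · intro t ht
    rw [show c.Kset x b = tr (k0 x b) (c.Hset x b) from rfl, Hset_empty x b hx, tr_empty] at ht
    exact absurd ht (notMem_empty t)

lemma Jset_sub_W0 (g : Good c) (x : ℝ) (b : Bool) : c.Jset x b ⊆ W0 := by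
  by_cases hx : x ∈ c.X
  · have hx0 : x ≠ 0 := by
      have := g.notint x hx 0
      simpa using this
    intro t ht
    have ht' : (2:ℝ)^(-(j0 x b)) * t ∈ c.Hset x b := ht
    have key : (2:ℝ)^(j0 x b) * ((2:ℝ)^(-(j0 x b)) * t) = t := by
      rw [← mul_assoc, ← zpow_add₀ (by norm_num : (2:ℝ) ≠ 0)]
      simp
    cases b
    · simp only [Hset, hx, if_true, if_false, Bool.false_eq_true, mem_Ioo] at ht'
      have := hJL x ((2:ℝ)^(-(j0 x false)) * t) hx0
        (by have := g.eD x hx false; simp only [wD, if_false, Bool.false_eq_true] at this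
            have hj : jL x = j0 x false := by simp [j0]
            rw [← hj] at ht' ⊢
            linarith [ht'.1])
        (by have hj : jL x = j0 x false := by simp [j0]
            rw [← hj] at ht'; exact ht'.2)
      have hj : jL x = j0 x false := by simp [j0]
      rw [hj, key] at this
      exact this
    · simp only [Hset, hx, if_true, mem_Ioo] at ht'
      have := hJR x ((2:ℝ)^(-(j0 x true)) * t) hx0
        (by have hj : jR x = j0 x true := by simp [j0]
            rw [← hj] at ht'; exact ht'.1)
        (by have := g.eD x hx true; simp only [wD, if_true] at this
            have hj : jR x = j0 x true := by simp [j0]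
            rw [← hj] at ht' ⊢
            linarith [ht'.2])
      have hj : jR x = j0 x true := by simp [j0]
      rw [hj, key] at this
      exact this
  · intro t ht
    rw [show c.Jset x b = dl (j0 x b) (c.Hset x b) from rfl, Hset_empty x b hx, dl_empty] at ht
    exact absurd ht (notMem_empty t)

lemma Kset_Wnd (g : Good c) (x : ℝ) (b : Bool) : c.Kset x b ⊆ Wnd (s0 x b) := by
  intro t ht
  have h1 := Kset_sub_W0 g x b ht
  have h2 := Kset_amb g x b ht
  simp only [mem_Ioo] at h2
  by_cases hx : x ∈ c.X
  · have hε := g.e14 x hx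
    by_cases hτ : 0 < tmark x b
    · have hs : s0 x b = true := by simp [s0, hτ]
      rw [hs]
      rcases h1 with h1 | h1
      · simpa [Wnd] using h1
      · exfalso
        simp only [mem_Ico] at h1
        have hεp := g.epos x hx
        linarith [h1.2, h2.1]
    · have hs : s0 x b = false := by simp [s0, hτ]
      rw [hs]
      rcases h1 with h1 | h1
      · exfalso
        simp only [mem_Ico] at h1
        push_neg at hτ
        have hεp := g.epos x hx
        linarith [h1.1, h2.2]
      · simpa [Wnd] using h1
  · exfalso
    rw [show c.Kset x b = tr (k0 x b) (c.Hset x b) from rfl, Hset_empty x b hx, tr_empty] at ht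
    exact absurd ht (notMem_empty t)

lemma CC_empty (x : ℝ) (b : Bool) (hx : x ∉ c.X) : ∀ k, c.CC x b k = ∅ := by
  intro k
  induction k with
  | zero =>
      show tr (k0 x b) (c.Hset x b) = ∅
      rw [Hset_empty x b hx, tr_empty]
  | succ k ih =>
      show tr _ (dl _ (c.CC x b k \ c.JU)) = ∅
      rw [ih, empty_diff, dl_empty, tr_empty]

lemma GG_empty (x : ℝ) (b : Bool) (hx : x ∉ c.X) : ∀ k, c.GG x b k = ∅ := by
  intro k
  induction k with
  | zero =>
      show (c.Jset x b) \ c.TU = ∅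
      rw [show c.Jset x b = dl (j0 x b) (c.Hset x b) from rfl, Hset_empty x b hx, dl_empty,
        empty_diff]
  | succ k ih =>
      show dl _ (tr _ (c.GG x b k)) = ∅
      rw [ih, tr_empty, dl_empty]

lemma NN_ge (x : ℝ) (b : Bool) (k : ℕ) : c.N0 + 1 ≤ c.NN x b k := by
  simp only [NN]; omega

lemma NN_one (x : ℝ) (b : Bool) (k : ℕ) : 1 ≤ c.NN x b k := by
  have := NN_ge (c := c) x b k; omega

lemma mf_ge (x : ℝ) (b : Bool) (k : ℕ) : c.m0 ≤ c.mf x b k := by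
  simp only [mf]; omega

lemma CC_band (g : Good c) (x : ℝ) (b : Bool) :
    ∀ k, c.CC x b k ⊆ Wnd (sgn (s0 x b) k) ∧
      (1 ≤ k → c.CC x b k ⊆ Bnd (sgn (s0 x b) k) (c.NN x b k)) :=
  chainC_band _ _ _ _ (Kset_Wnd g x b) (fun k => NN_one x b k)

lemma CC_sub_W0 (g : Good c) (x : ℝ) (b : Bool) (k : ℕ) : c.CC x b k ⊆ W0 :=
  ((CC_band g x b k).1).trans (Wnd_subset_W0 _)

lemma aa_pos : (0:ℝ) < c.aa := by
  have : (0:ℝ) < (2:ℝ)^(-(c.r0:ℤ)) := zpow_pos (by norm_num) _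
  simp only [aa]; linarith

lemma aa_lt (g : Good c) : c.aa ≤ 5/8 := by
  have h : (2:ℝ)^(-(c.r0:ℤ)) ≤ (2:ℝ)^(-(3:ℤ)) := by
    apply zpow_le_zpow_right₀ (by norm_num)
    have := g.r03; omega
  simp only [aa]
  norm_num at h ⊢
  linarith

lemma MM_cast (g : Good c) (x : ℝ) (b : Bool) (k : ℕ) :
    ((c.MM x b k : ℤ) : ℝ) = (2:ℝ)^((c.mf x b k : ℕ):ℤ) * c.aa + 2 := by
  set m := c.mf x b k with hm
  have hm0 : c.m0 ≤ m := mf_ge x b k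
  have h1 : 1 ≤ m := by have := g.m0r0; have := g.r03; omega
  have hr : c.r0 ≤ m := by have := g.m0r0; omega
  have e1 : (2:ℝ)^(m - 1 : ℕ) * 2 = (2:ℝ)^(m:ℕ) := by
    rw [← pow_succ]
    congr 1
    omega
  have e2 : (2:ℝ)^(m - c.r0 : ℕ) * (2:ℝ)^(c.r0 : ℕ) = (2:ℝ)^(m:ℕ) := by
    rw [← pow_add]
    congr 1
    omega
  have e3 : (2:ℝ)^((m:ℕ):ℤ) = (2:ℝ)^(m:ℕ) := zpow_natCast 2 m
  have e4 : ((2:ℝ)^(-(c.r0:ℤ))) * (2:ℝ)^(c.r0:ℕ) = 1 := by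
    rw [← zpow_natCast 2 c.r0, ← zpow_add₀ (by norm_num : (2:ℝ) ≠ 0)]
    simp
  show ((2^(m - 1) + 2^(m - c.r0) + 2 : ℤ) : ℝ) = (2:ℝ)^((m:ℕ):ℤ) * c.aa + 2
  push_cast
  rw [e3]
  simp only [aa]
  have hp : (0:ℝ) < (2:ℝ)^(c.r0:ℕ) := by positivity
  have e5 : (2:ℝ)^(m:ℕ) * (2:ℝ)^(-(c.r0:ℤ)) = (2:ℝ)^(m - c.r0 : ℕ) := by
    rw [← e2, mul_assoc, mul_comm ((2:ℝ)^(c.r0:ℕ)), e4, mul_one]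
  field_simp
  nlinarith [e1, e2, e4, e5]

lemma JB_sub_W0 (g : Good c) (x : ℝ) (b : Bool) (k : ℕ) (hk : 1 ≤ k) :
    JB c.aa (c.mf x b k) ⊆ W0 := by
  intro t ht
  simp only [JB, mem_Ico] at ht
  have hmono : (2:ℝ)^(-((c.mf x b k : ℕ):ℤ)) ≤ (2:ℝ)^(-(c.m0:ℤ)) := by
    apply zpow_le_zpow_right₀ (by norm_num)
    have := mf_ge (c := c) x b k; omega
  have hp : (0:ℝ) < (2:ℝ)^(-((c.mf x b k : ℕ):ℤ)) := zpow_pos (by norm_num) _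
  have haa := aa_pos (c := c)
  refine Or.inl ⟨?_, ?_⟩
  · have : (1/2 : ℝ) < c.aa := by
      have : (0:ℝ) < (2:ℝ)^(-(c.r0:ℤ)) := zpow_pos (by norm_num) _
      simp only [aa]; linarith
    linarith [ht.1]
  · have := g.aa34
    linarith [ht.2]

lemma GG_band (g : Good c) (x : ℝ) (b : Bool) :
    ∀ k, c.GG x b k ⊆ Set.Ico (-1:ℝ) 1 ∧
      (1 ≤ k → c.GG x b k ⊆ JB c.aa (c.mf x b k)) := by
  apply chainG_band
  · exact (Jset_sub_W0 g x b).trans W0_sub_Ico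
  · exact aa_pos
  · intro k hk
    exact MM_cast g x b k
  · intro k hk
    have hmono : (2:ℝ)^(-((c.mf x b k : ℕ):ℤ)) ≤ (2:ℝ)^(-(c.m0:ℤ)) := by
      apply zpow_le_zpow_right₀ (by norm_num)
      have := mf_ge (c := c) x b k; omega
    have := g.aa34
    linarith

lemma GG_sub_W0 (g : Good c) (x : ℝ) (b : Bool) (k : ℕ) : c.GG x b k ⊆ W0 := by
  rcases Nat.eq_zero_or_pos k with hk | hk
  · subst hk
    exact (diff_subset).trans (Jset_sub_W0 g x b)
  · exact ((GG_band g x b k).2 hk).trans (JB_sub_W0 g x b k hk)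

lemma Rem_sub_W0 (g : Good c) (i : Idx) : c.Rem i ⊆ W0 := by
  rcases i with ⟨⟨x,b⟩,k,o⟩ | ⟨⟨x,b⟩,k⟩
  · rcases o with _ | ⟨y,c'⟩
    · exact (diff_subset).trans (CC_sub_W0 g x b k)
    · exact (inter_subset_left).trans (CC_sub_W0 g x b k)
  · exact GG_sub_W0 g x b k

end Cfg

-- ## disjointness of the removed family

lemma zpow_two_inj {j j' : ℤ} (h : (2:ℝ)^j = (2:ℝ)^j') : j = j' := by
  by_contra hne
  rcases lt_or_gt_of_ne hne with hl | hl
  · have := zpow_lt_zpow_right₀ (show (1:ℝ) < 2 by norm_num) hl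
    linarith
  · have := zpow_lt_zpow_right₀ (show (1:ℝ) < 2 by norm_num) hl
    linarith

namespace Cfg

variable {c : Cfg}

lemma Hset_halves (x : ℝ) {b b' : Bool} (hbb : b ≠ b') :
    ∀ t, t ∈ c.Hset x b → t ∈ c.Hset x b' → False := by
  intro t h1 h2
  by_cases hx : x ∈ c.X
  · cases b <;> cases b'
    · exact hbb rfl
    · simp only [Hset, hx, if_true, if_false, Bool.false_eq_true, mem_Ioo] at h1 h2
      linarith [h1.2, h2.1]
    · simp only [Hset, hx, if_true, if_false, Bool.false_eq_true, mem_Ioo] at h1 h2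
      linarith [h1.1, h2.2]
    · exact hbb rfl
  · rw [Hset_empty x b hx] at h1
    exact absurd h1 (notMem_empty t)

lemma Kset_disj (g : Good c) (x y : ℝ) (b b' : Bool) (hne : (x, b) ≠ (y, b')) :
    ∀ t, t ∈ c.Kset x b → t ∈ c.Kset y b' → False := by
  intro t h1 h2
  by_cases hx : x ∈ c.X
  · by_cases hy : y ∈ c.X
    · by_cases hm : tmark x b = tmark y b'
      · -- same mark : same point, opposite sides
        have hxy : x = y := by
          by_contra hxy
          exact g.markinjT x hx y hy b b' hxy hm
        subst hxy
        have hk : k0 x b = k0 x b' := by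
          have : (k0 x b : ℝ) = (k0 x b' : ℝ) := by
            simp only [tmark] at hm; linarith
          exact_mod_cast this
        have hbb : b ≠ b' := by
          intro hbb'
          exact hne (by rw [hbb'])
        have e1 : t - (k0 x b : ℝ) ∈ c.Hset x b := h1
        have e2 : t - (k0 x b' : ℝ) ∈ c.Hset x b' := h2
        rw [← hk] at e2
        exact Hset_halves x hbb _ e1 e2
      · have a1 := Kset_amb g x b h1
        have a2 := Kset_amb g y b' h2
        simp only [mem_Ioo] at a1 a2
        have := g.gapT x hx y hy b b' hm
        rcases abs_cases (tmark x b - tmark y b') with ⟨he, -⟩ | ⟨he, -⟩ <;>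
          rw [he] at this <;> linarith [a1.1, a1.2, a2.1, a2.2]
    · rw [show c.Kset y b' = tr (k0 y b') (c.Hset y b') from rfl,
        Hset_empty y b' hy, tr_empty] at h2
      exact absurd h2 (notMem_empty t)
  · rw [show c.Kset x b = tr (k0 x b) (c.Hset x b) from rfl,
      Hset_empty x b hx, tr_empty] at h1
    exact absurd h1 (notMem_empty t)

lemma Jset_disj (g : Good c) (x y : ℝ) (b b' : Bool) (hne : (x, b) ≠ (y, b')) :
    ∀ t, t ∈ c.Jset x b → t ∈ c.Jset y b' → False := by
  intro t h1 h2
  by_cases hx : x ∈ c.X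
  · by_cases hy : y ∈ c.X
    · by_cases hm : dmark x b = dmark y b'
      · have hxy : x = y := by
          by_contra hxy
          exact g.markinjD x hx y hy b b' hxy hm
        subst hxy
        have hx0 : x ≠ 0 := by
          have := g.notint x hx 0; simpa using this
        have hj : j0 x b = j0 x b' := by
          simp only [dmark] at hm
          field_simp at hm
          exact zpow_two_inj hm
        have hbb : b ≠ b' := by
          intro hbb'
          exact hne (by rw [hbb'])
        have e1 : (2:ℝ)^(-(j0 x b)) * t ∈ c.Hset x b := h1
        have e2 : (2:ℝ)^(-(j0 x b')) * t ∈ c.Hset x b' := h2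
        rw [← hj] at e2
        exact Hset_halves x hbb _ e1 e2
      · have a1 := Jset_amb g x b h1
        have a2 := Jset_amb g y b' h2
        simp only [mem_Ioo] at a1 a2
        have := g.gapD x hx y hy b b' hm
        rcases abs_cases (dmark x b - dmark y b') with ⟨he, -⟩ | ⟨he, -⟩ <;>
          rw [he] at this <;> linarith [a1.1, a1.2, a2.1, a2.2]
    · rw [show c.Jset y b' = dl (j0 y b') (c.Hset y b') from rfl,
        Hset_empty y b' hy, dl_empty] at h2
      exact absurd h2 (notMem_empty t)
  · rw [show c.Jset x b = dl (j0 x b) (c.Hset x b) from rfl,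
      Hset_empty x b hx, dl_empty] at h1
    exact absurd h1 (notMem_empty t)

lemma mixed_inj {nn i i' k k' : ℕ} (hi : i < nn) (hi' : i' < nn)
    (h : nn*k + i = nn*k' + i') : k = k' ∧ i = i' := by
  rcases Nat.lt_trichotomy k k' with hl | he | hl
  · exfalso
    have h2 : nn*k + nn ≤ nn*k' := by
      have h3 := Nat.mul_le_mul_left nn (Nat.succ_le_of_lt hl)
      rw [Nat.mul_succ] at h3
      exact h3
    linarith
  · exact ⟨he, by subst he; exact Nat.add_left_cancel h⟩
  · exfalso
    have h2 : nn*k' + nn ≤ nn*k := by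
      have h3 := Nat.mul_le_mul_left nn (Nat.succ_le_of_lt hl)
      rw [Nat.mul_succ] at h3
      exact h3
    linarith

lemma NN_inj (g : Good c) {x y : ℝ} (hx : x ∈ c.X) (hy : y ∈ c.X) {b b' : Bool} {k k' : ℕ}
    (h : c.NN x b k = c.NN y b' k') : x = y ∧ b = b' ∧ k = k' := by
  have hix := g.nidxlt x hx
  have hiy := g.nidxlt y hy
  simp only [NN] at h
  set A := c.nn*k + c.nidx x with hA
  set B := c.nn*k' + c.nidx y with hB
  have hbb : b = b' := by
    cases b <;> cases b' <;> simp only [if_true, if_false, Bool.false_eq_true] at h <;>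
      first
        | rfl
        | omega
  subst hbb
  have hAB : A = B := by
    cases b <;> simp only [if_true, if_false, Bool.false_eq_true] at h <;> omega
  rw [hA, hB] at hAB
  obtain ⟨hkk, hii⟩ := mixed_inj hix hiy hAB
  refine ⟨?_, rfl, hkk⟩
  by_contra hxy
  exact g.nidxinj x hx y hy hxy hii

lemma mf_gap (g : Good c) {x y : ℝ} (hx : x ∈ c.X) (hy : y ∈ c.X) {b b' : Bool} {k k' : ℕ}
    (h : ¬ (x = y ∧ b = b' ∧ k = k')) :
    c.mf x b k + 2 ≤ c.mf y b' k' ∨ c.mf y b' k' + 2 ≤ c.mf x b k := by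
  have hix := g.nidxlt x hx
  have hiy := g.nidxlt y hy
  set A := c.nn*k + c.nidx x with hA
  set B := c.nn*k' + c.nidx y with hB
  have hMne : 2*A + (if b then 1 else 0) ≠ 2*B + (if b' then 1 else 0) := by
    intro he
    apply h
    have hbb : b = b' := by
      cases b <;> cases b' <;> simp only [if_true, if_false, Bool.false_eq_true] at he <;>
        first
          | rfl
          | omega
    subst hbb
    have hAB : A = B := by
      cases b <;> simp only [if_true, if_false, Bool.false_eq_true] at he <;> omega
    rw [hA, hB] at hAB
    obtain ⟨hkk, hii⟩ := mixed_inj hix hiy hAB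
    refine ⟨?_, rfl, hkk⟩
    by_contra hxy
    exact g.nidxinj x hx y hy hxy hii
  simp only [mf]
  omega

lemma CC_disj (g : Good c) (x y : ℝ) (b b' : Bool) (k k' : ℕ)
    (hne : ¬ (x = y ∧ b = b' ∧ k = k')) :
    ∀ t, t ∈ c.CC x b k → t ∈ c.CC y b' k' → False := by
  intro t h1 h2
  by_cases hx : x ∈ c.X
  swap
  · rw [CC_empty x b hx] at h1; exact absurd h1 (notMem_empty t)
  by_cases hy : y ∈ c.X
  swap
  · rw [CC_empty y b' hy] at h2; exact absurd h2 (notMem_empty t)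
  have key_mixed : ∀ (z w : ℝ) (bz bw : Bool) (kw : ℕ), z ∈ c.X → 1 ≤ kw →
      ∀ s, s ∈ c.Kset z bz → s ∈ c.CC w bw kw → False := by
    intro z w bz bw kw hz hkw s hs1 hs2
    have hb := (CC_band g w bw kw).2 hkw hs2
    have hfar := Bnd_far (show c.N0 < c.NN w bw kw from by have := NN_ge (c := c) w bw kw; omega) hb
    have hamb := Kset_amb g z bz hs1
    simp only [mem_Ioo] at hamb
    have htau := g.tau1 z hz bz
    have : |s| - |tmark z bz| ≤ |s - tmark z bz| := abs_sub_abs_le_abs_sub _ _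
    have habs : |s - tmark z bz| < c.eps z := by
      rw [abs_lt]; constructor <;> linarith [hamb.1, hamb.2]
    linarith
  rcases Nat.eq_zero_or_pos k with hk | hk <;> rcases Nat.eq_zero_or_pos k' with hk' | hk'
  · -- both zero : Kset
    subst hk; subst hk'
    have hne2 : (x, b) ≠ (y, b') := by
      intro he
      apply hne
      have h1 := congrArg Prod.fst he
      have h2 := congrArg Prod.snd he
      exact ⟨h1, h2, rfl⟩
    exact Kset_disj g x y b b' hne2 t h1 h2
  · subst hk
    exact key_mixed x y b b' k' hx hk' t h1 h2
  · subst hk'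
    exact key_mixed y x b' b k hy hk t h2 h1
  · -- both bands
    have hb1 := (CC_band g x b k).2 hk h1
    have hb2 := (CC_band g y b' k').2 hk' h2
    refine Bnd_disjoint ?_ (NN_one x b k) (NN_one y b' k') t hb1 hb2
    rintro ⟨-, hN⟩
    obtain ⟨he1, he2, he3⟩ := NN_inj g hx hy hN
    exact hne ⟨he1, he2, he3⟩

lemma GG0_amb (g : Good c) (x : ℝ) (b : Bool) :
    c.GG x b 0 ⊆ Set.Ioo (dmark x b - (2:ℝ)^(j0 x b) * c.eps x)
      (dmark x b + (2:ℝ)^(j0 x b) * c.eps x) :=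
  (diff_subset).trans (Jset_amb g x b)

lemma JB_region (g : Good c) {x : ℝ} {b : Bool} {k : ℕ} (hk : 1 ≤ k) {t : ℝ}
    (ht : t ∈ c.GG x b k) : c.aa < t ∧ t < c.aa + 3*(2:ℝ)^(-(c.m0:ℤ)) := by
  have hb := (GG_band g x b k).2 hk ht
  simp only [JB, mem_Ico] at hb
  have hmono : (2:ℝ)^(-((c.mf x b k : ℕ):ℤ)) ≤ (2:ℝ)^(-(c.m0:ℤ)) := by
    apply zpow_le_zpow_right₀ (by norm_num)
    have := mf_ge (c := c) x b k; omega
  have hp : (0:ℝ) < (2:ℝ)^(-((c.mf x b k : ℕ):ℤ)) := zpow_pos (by norm_num) _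
  constructor <;> linarith [hb.1, hb.2]

lemma GG_disj (g : Good c) (x y : ℝ) (b b' : Bool) (k k' : ℕ)
    (hne : ¬ (x = y ∧ b = b' ∧ k = k')) :
    ∀ t, t ∈ c.GG x b k → t ∈ c.GG y b' k' → False := by
  intro t h1 h2
  by_cases hx : x ∈ c.X
  swap
  · rw [GG_empty x b hx] at h1; exact absurd h1 (notMem_empty t)
  by_cases hy : y ∈ c.X
  swap
  · rw [GG_empty y b' hy] at h2; exact absurd h2 (notMem_empty t)
  have key_mixed : ∀ (z w : ℝ) (bz bw : Bool) (kw : ℕ), z ∈ c.X → 1 ≤ kw →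
      ∀ s, s ∈ c.GG z bz 0 → s ∈ c.GG w bw kw → False := by
    intro z w bz bw kw hz hkw s hs1 hs2
    have hamb := GG0_amb g z bz hs1
    simp only [mem_Ioo] at hamb
    have hreg := JB_region g hkw hs2
    rcases g.JJB z hz bz with hc | hc <;> linarith [hamb.1, hamb.2, hreg.1, hreg.2]
  rcases Nat.eq_zero_or_pos k with hk | hk <;> rcases Nat.eq_zero_or_pos k' with hk' | hk'
  · subst hk; subst hk'
    have hne2 : (x, b) ≠ (y, b') := by
      intro he
      apply hne
      exact ⟨congrArg Prod.fst he, congrArg Prod.snd he, rfl⟩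
    exact Jset_disj g x y b b' hne2 t (diff_subset h1) (diff_subset h2)
  · subst hk
    exact key_mixed x y b b' k' hx hk' t h1 h2
  · subst hk'
    exact key_mixed y x b' b k hy hk t h2 h1
  · have hb1 := (GG_band g x b k).2 hk h1
    have hb2 := (GG_band g y b' k').2 hk' h2
    rcases mf_gap g hx hy hne with hg | hg
    · exact JB_disjoint hg t hb1 hb2
    · exact JB_disjoint hg t hb2 hb1

lemma CC_GG_disj (g : Good c) (x y : ℝ) (b b' : Bool) (k k' : ℕ) :
    ∀ t, t ∈ c.CC x b k → t ∈ c.GG y b' k' → False := by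
  intro t h1 h2
  by_cases hx : x ∈ c.X
  swap
  · rw [CC_empty x b hx] at h1; exact absurd h1 (notMem_empty t)
  by_cases hy : y ∈ c.X
  swap
  · rw [GG_empty y b' hy] at h2; exact absurd h2 (notMem_empty t)
  rcases Nat.eq_zero_or_pos k' with hk' | hk'
  · -- GG 0 excludes TU ⊇ CC
    subst hk'
    have hTU : t ∈ c.TU := by
      refine mem_iUnion.2 ⟨x, mem_iUnion.2 ⟨b, mem_iUnion.2 ⟨k, h1⟩⟩⟩
    exact h2.2 hTU
  rcases Nat.eq_zero_or_pos k with hk | hk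
  · -- Kset vs JB region
    subst hk
    have hamb := Kset_amb g x b h1
    simp only [mem_Ioo] at hamb
    have hreg := JB_region g hk' h2
    rcases g.KJB x hx b with hc | hc <;> linarith [hamb.1, hamb.2, hreg.1, hreg.2]
  · -- Bnd vs JB region
    have hb1 := (CC_band g x b k).2 hk h1
    have hfar := Bnd_far (show c.N0 < c.NN x b k from by have := NN_ge (c := c) x b k; omega) hb1
    have hreg := JB_region g hk' h2
    have hsm : (2:ℝ)^(-(c.N0:ℤ)) ≤ 1/8 := by
      calc (2:ℝ)^(-(c.N0:ℤ)) ≤ (2:ℝ)^(-(3:ℤ)) := by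
            apply zpow_le_zpow_right₀ (by norm_num)
            have := g.N03; omega
        _ = 1/8 := by norm_num
    have haam := g.aa34
    have habs : |t| = t := abs_of_pos (lt_trans (aa_pos (c := c)) hreg.1)
    linarith [hreg.2]

/-- THE pairwise disjointness of the removed family -/
lemma Rem_disj (g : Good c) : ∀ i i' : Idx, ∀ t : ℝ, i ≠ i' →
    t ∈ c.Rem i → t ∈ c.Rem i' → False := by
  rintro (⟨⟨x,b⟩,k,o⟩ | ⟨⟨x,b⟩,k⟩) (⟨⟨y,b'⟩,k',o'⟩ | ⟨⟨y,b'⟩,k'⟩) t hne h1 h2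
  · -- inl inl
    by_cases hsame : x = y ∧ b = b' ∧ k = k'
    · obtain ⟨e1, e2, e3⟩ := hsame
      subst e1; subst e2; subst e3
      have ho : o ≠ o' := by
        intro he; exact hne (by rw [he])
      rcases o with _ | ⟨z,bz⟩ <;> rcases o' with _ | ⟨z',bz'⟩
      · exact ho rfl
      · -- none, some : t ∉ JU but t ∈ Jset z' bz'
        exact h1.2 (mem_iUnion.2 ⟨z', mem_iUnion.2 ⟨bz', h2.2⟩⟩)
      · exact h2.2 (mem_iUnion.2 ⟨z, mem_iUnion.2 ⟨bz, h1.2⟩⟩)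
      · have hzz : (z, bz) ≠ (z', bz') := by
          intro he
          apply ho
          rw [he]
        exact Jset_disj g z z' bz bz' hzz t h1.2 h2.2
    · have hc1 : t ∈ c.CC x b k := by
        rcases o with _ | ⟨z,bz⟩
        · exact h1.1
        · exact h1.1
      have hc2 : t ∈ c.CC y b' k' := by
        rcases o' with _ | ⟨z,bz⟩
        · exact h2.1
        · exact h2.1
      exact CC_disj g x y b b' k k' hsame t hc1 hc2
  · -- inl inr
    have hc1 : t ∈ c.CC x b k := by
      rcases o with _ | ⟨z,bz⟩ <;> [exact h1.1; exact h1.1]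
    exact CC_GG_disj g x y b b' k k' t hc1 h2
  · have hc2 : t ∈ c.CC y b' k' := by
      rcases o' with _ | ⟨z,bz⟩ <;> [exact h2.1; exact h2.1]
    exact CC_GG_disj g y x b' b k' k t hc2 h1
  · -- inr inr
    have hsame : ¬ (x = y ∧ b = b' ∧ k = k') := by
      rintro ⟨e1, e2, e3⟩
      subst e1; subst e2; subst e3
      exact hne rfl
    exact GG_disj g x y b b' k k' hsame t h1 h2

end Cfg

-- ## the two descriptions of the added set agree

lemma mem_tr_neg {m : ℤ} {S : Set ℝ} {t : ℝ} : t ∈ tr (-m) S ↔ t + m ∈ S := by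
  rw [mem_tr]
  have e : t - ((-m : ℤ):ℝ) = t + m := by push_cast; ring
  rw [e]

lemma dl_cancel' (p : ℤ) (S : Set ℝ) : dl p (dl (-p) S) = S := by
  rw [dl_dl]; simp [dl]

namespace Cfg

variable {c : Cfg}

/-- the common refined description of the added set -/
def AddE (c : Cfg) : Set ℝ :=
  (⋃ x, ⋃ b, c.Hset x b) ∪
  (⋃ x, ⋃ b, ⋃ k, dl (-(c.NN x b (k+1) : ℤ)) (c.CC x b k \ c.JU)) ∪
  (⋃ x, ⋃ b, ⋃ k, tr (c.MM x b (k+1)) (c.GG x b k))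

lemma CC_succ (x : ℝ) (b : Bool) (k : ℕ) :
    c.CC x b (k+1) = tr (usign (sgn (s0 x b) k)) (dl (-(c.NN x b (k+1) : ℤ)) (c.CC x b k \ c.JU)) :=
  rfl

lemma CC_zero (x : ℝ) (b : Bool) : c.CC x b 0 = tr (k0 x b) (c.Hset x b) := rfl

lemma GG_zero (x : ℝ) (b : Bool) : c.GG x b 0 = c.Jset x b \ c.TU := rfl

lemma GG_succ (x : ℝ) (b : Bool) (k : ℕ) :
    c.GG x b (k+1) = dl (-(c.mf x b (k+1) : ℤ)) (tr (c.MM x b (k+1)) (c.GG x b k)) := rfl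

lemma addT_eq : (⋃ i, tr (c.mT i) (c.Rem i)) = c.AddE := by
  apply Set.Subset.antisymm
  · -- ⊆
    refine iUnion_subset ?_
    rintro (⟨⟨x,b⟩,k,o⟩ | ⟨⟨x,b⟩,k⟩)
    · have hsub : c.Rem (.inl ((x,b),k,o)) ⊆ c.CC x b k := by
        rcases o with _ | ⟨y,c'⟩
        · exact diff_subset
        · exact inter_subset_left
      rcases k with _ | k
      · -- k = 0
        have : tr (c.mT (.inl ((x,b),0,o))) (c.Rem (.inl ((x,b),0,o))) ⊆ c.Hset x b := by
          have h1 : tr (-(k0 x b)) (c.CC x b 0) = c.Hset x b := by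
            rw [CC_zero, tr_cancel]
          rw [show c.mT (.inl ((x,b),0,o)) = -(k0 x b) from rfl]
          rw [← h1]
          exact tr_mono _ hsub
        exact this.trans (subset_union_left.trans subset_union_left |>.trans
          (by exact fun t ht => (by
            rcases ht with ht | ht
            · rcases ht with ht | ht
              · exact Or.inl (Or.inl (mem_iUnion.2 ⟨x, mem_iUnion.2 ⟨b, (by exact ht : t ∈ c.Hset x b)⟩⟩))
              · exact Or.inl (Or.inr ht)
            · exact Or.inr ht)))
      · -- k + 1
        have h1 : tr (-(usign (sgn (s0 x b) k))) (c.CC x b (k+1)) =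
            dl (-(c.NN x b (k+1) : ℤ)) (c.CC x b k \ c.JU) := by
          rw [CC_succ, tr_cancel]
        have : tr (c.mT (.inl ((x,b),k+1,o))) (c.Rem (.inl ((x,b),k+1,o))) ⊆
            dl (-(c.NN x b (k+1) : ℤ)) (c.CC x b k \ c.JU) := by
          rw [show c.mT (.inl ((x,b),k+1,o)) = -(usign (sgn (s0 x b) k)) from rfl, ← h1]
          exact tr_mono _ hsub
        refine this.trans ?_
        intro t ht
        exact Or.inl (Or.inr (mem_iUnion.2 ⟨x, mem_iUnion.2 ⟨b, mem_iUnion.2 ⟨k, ht⟩⟩⟩))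
    · -- inr
      intro t ht
      exact Or.inr (mem_iUnion.2 ⟨x, mem_iUnion.2 ⟨b, mem_iUnion.2 ⟨k,
        (by exact ht : t ∈ tr (c.MM x b (k+1)) (c.GG x b k))⟩⟩⟩)
  · -- ⊇
    rintro t (ht | ht)
    · rcases ht with ht | ht
      · -- Hset part
        obtain ⟨x, hx⟩ := mem_iUnion.1 ht
        obtain ⟨b, hb⟩ := mem_iUnion.1 hx
        have hK : t + (k0 x b : ℝ) ∈ c.CC x b 0 := by
          rw [CC_zero]
          show t + (k0 x b : ℝ) - (k0 x b : ℝ) ∈ c.Hset x b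
          simpa using hb
        by_cases hJ : t + (k0 x b : ℝ) ∈ c.JU
        · obtain ⟨y, hy⟩ := mem_iUnion.1 hJ
          obtain ⟨c', hc'⟩ := mem_iUnion.1 hy
          refine mem_iUnion.2 ⟨.inl ((x,b),0,some (y,c')), ?_⟩
          rw [show c.mT (.inl ((x,b),0,some (y,c'))) = -(k0 x b) from rfl, mem_tr_neg]
          exact ⟨hK, hc'⟩
        · refine mem_iUnion.2 ⟨.inl ((x,b),0,none), ?_⟩
          rw [show c.mT (.inl ((x,b),0,none)) = -(k0 x b) from rfl, mem_tr_neg]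
          exact ⟨hK, hJ⟩
      · -- dl part
        obtain ⟨x, hx⟩ := mem_iUnion.1 ht
        obtain ⟨b, hb⟩ := mem_iUnion.1 hx
        obtain ⟨k, hk⟩ := mem_iUnion.1 hb
        have hK : t + (usign (sgn (s0 x b) k) : ℝ) ∈ c.CC x b (k+1) := by
          rw [CC_succ]
          show t + (usign (sgn (s0 x b) k) : ℝ) - (usign (sgn (s0 x b) k) : ℝ) ∈
            dl (-(c.NN x b (k+1) : ℤ)) (c.CC x b k \ c.JU)
          simpa using hk
        by_cases hJ : t + (usign (sgn (s0 x b) k) : ℝ) ∈ c.JU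
        · obtain ⟨y, hy⟩ := mem_iUnion.1 hJ
          obtain ⟨c', hc'⟩ := mem_iUnion.1 hy
          refine mem_iUnion.2 ⟨.inl ((x,b),k+1,some (y,c')), ?_⟩
          rw [show c.mT (.inl ((x,b),k+1,some (y,c'))) = -(usign (sgn (s0 x b) k)) from rfl,
            mem_tr_neg]
          exact ⟨hK, hc'⟩
        · refine mem_iUnion.2 ⟨.inl ((x,b),k+1,none), ?_⟩
          rw [show c.mT (.inl ((x,b),k+1,none)) = -(usign (sgn (s0 x b) k)) from rfl, mem_tr_neg]
          exact ⟨hK, hJ⟩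
    · -- GG part
      obtain ⟨x, hx⟩ := mem_iUnion.1 ht
      obtain ⟨b, hb⟩ := mem_iUnion.1 hx
      obtain ⟨k, hk⟩ := mem_iUnion.1 hb
      exact mem_iUnion.2 ⟨.inr ((x,b),k), hk⟩

lemma addD_eq : (⋃ i, dl (c.pD i) (c.Rem i)) = c.AddE := by
  apply Set.Subset.antisymm
  · refine iUnion_subset ?_
    rintro (⟨⟨x,b⟩,k,o⟩ | ⟨⟨x,b⟩,k⟩)
    · rcases o with _ | ⟨y,c'⟩
      · -- none : exactly the middle part
        intro t ht
        exact Or.inl (Or.inr (mem_iUnion.2 ⟨x, mem_iUnion.2 ⟨b, mem_iUnion.2 ⟨k,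
          (by exact ht : t ∈ dl (-(c.NN x b (k+1):ℤ)) (c.CC x b k \ c.JU))⟩⟩⟩))
      · -- some : lands in Hset y c'
        have h1 : dl (-(j0 y c')) (c.Jset y c') = c.Hset y c' := by
          rw [show c.Jset y c' = dl (j0 y c') (c.Hset y c') from rfl, dl_cancel]
        have hsub : dl (c.pD (.inl ((x,b),k,some (y,c')))) (c.Rem (.inl ((x,b),k,some (y,c')))) ⊆
            c.Hset y c' := by
          rw [show c.pD (.inl ((x,b),k,some (y,c'))) = -(j0 y c') from rfl, ← h1]
          exact dl_mono _ inter_subset_right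
        refine hsub.trans ?_
        intro t ht
        exact Or.inl (Or.inl (mem_iUnion.2 ⟨y, mem_iUnion.2 ⟨c', ht⟩⟩))
    · rcases k with _ | k
      · -- inr 0 : GG 0 ⊆ Jset, lands in Hset x b
        have h1 : dl (-(j0 x b)) (c.Jset x b) = c.Hset x b := by
          rw [show c.Jset x b = dl (j0 x b) (c.Hset x b) from rfl, dl_cancel]
        have hsub : dl (c.pD (.inr ((x,b),0))) (c.Rem (.inr ((x,b),0))) ⊆ c.Hset x b := by
          rw [show c.pD (.inr ((x,b),0)) = -(j0 x b) from rfl, ← h1]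
          exact dl_mono _ (show c.GG x b 0 ⊆ c.Jset x b from diff_subset)
        refine hsub.trans ?_
        intro t ht
        exact Or.inl (Or.inl (mem_iUnion.2 ⟨x, mem_iUnion.2 ⟨b, ht⟩⟩))
      · -- inr k+1
        have h1 : dl ((c.mf x b (k+1) : ℤ)) (c.GG x b (k+1)) = tr (c.MM x b (k+1)) (c.GG x b k) := by
          rw [GG_succ, dl_cancel']
        intro t ht
        have ht' : t ∈ tr (c.MM x b (k+1)) (c.GG x b k) := by
          rw [← h1]
          exact ht
        exact Or.inr (mem_iUnion.2 ⟨x, mem_iUnion.2 ⟨b, mem_iUnion.2 ⟨k, ht'⟩⟩⟩)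
  · rintro t (ht | ht)
    · rcases ht with ht | ht
      · obtain ⟨y, hy⟩ := mem_iUnion.1 ht
        obtain ⟨c', hc'⟩ := mem_iUnion.1 hy
        have hJ : (2:ℝ)^(j0 y c') * t ∈ c.Jset y c' := by
          show (2:ℝ)^(-(j0 y c')) * ((2:ℝ)^(j0 y c') * t) ∈ c.Hset y c'
          rw [← mul_assoc, ← zpow_add₀ (by norm_num : (2:ℝ) ≠ 0)]
          simpa using hc'
        by_cases hT : (2:ℝ)^(j0 y c') * t ∈ c.TU
        · obtain ⟨x, hx⟩ := mem_iUnion.1 hT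
          obtain ⟨b, hb⟩ := mem_iUnion.1 hx
          obtain ⟨k, hk⟩ := mem_iUnion.1 hb
          refine mem_iUnion.2 ⟨.inl ((x,b),k,some (y,c')), ?_⟩
          show (2:ℝ)^(-(-(j0 y c'))) * t ∈ c.CC x b k ∩ c.Jset y c'
          rw [neg_neg]
          exact ⟨hk, hJ⟩
        · refine mem_iUnion.2 ⟨.inr ((y,c'),0), ?_⟩
          show (2:ℝ)^(-(-(j0 y c'))) * t ∈ c.Jset y c' \ c.TU
          rw [neg_neg]
          exact ⟨hJ, hT⟩
      · obtain ⟨x, hx⟩ := mem_iUnion.1 ht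
        obtain ⟨b, hb⟩ := mem_iUnion.1 hx
        obtain ⟨k, hk⟩ := mem_iUnion.1 hb
        exact mem_iUnion.2 ⟨.inl ((x,b),k,none), hk⟩
    · obtain ⟨x, hx⟩ := mem_iUnion.1 ht
      obtain ⟨b, hb⟩ := mem_iUnion.1 hx
      obtain ⟨k, hk⟩ := mem_iUnion.1 hb
      refine mem_iUnion.2 ⟨.inr ((x,b),k+1), ?_⟩
      have h1 : dl ((c.mf x b (k+1) : ℤ)) (c.GG x b (k+1)) = tr (c.MM x b (k+1)) (c.GG x b k) := by
        rw [GG_succ, dl_cancel']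
      show t ∈ dl ((c.mf x b (k+1) : ℤ)) (c.GG x b (k+1))
      rw [h1]
      exact hk

end Cfg

-- ## measurability

lemma iUnion_reduceX {X : Set ℝ} (f : ℝ → Set ℝ) (h : ∀ x, x ∉ X → f x = ∅) :
    ⋃ x, f x = ⋃ x ∈ X, f x := by
  apply Set.Subset.antisymm
  · refine iUnion_subset fun x => ?_
    by_cases hx : x ∈ X
    · exact subset_biUnion_of_mem hx
    · rw [h x hx]; exact empty_subset _
  · exact iUnion₂_subset fun x _ => subset_iUnion f x

namespace Cfg

variable {c : Cfg}

lemma Hset_meas (x : ℝ) (b : Bool) : MeasurableSet (c.Hset x b) := by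
  by_cases hx : x ∈ c.X
  · cases b <;> simp only [Hset, hx, if_true, if_false, Bool.false_eq_true] <;>
      exact measurableSet_Ioo
  · rw [Hset_empty x b hx]; exact MeasurableSet.empty

lemma Kset_meas (x : ℝ) (b : Bool) : MeasurableSet (c.Kset x b) :=
  measurable_tr _ (Hset_meas x b)

lemma Jset_meas (x : ℝ) (b : Bool) : MeasurableSet (c.Jset x b) :=
  measurable_dl _ (Hset_meas x b)

lemma Jset_empty (x : ℝ) (b : Bool) (hx : x ∉ c.X) : c.Jset x b = ∅ := by
  rw [show c.Jset x b = dl (j0 x b) (c.Hset x b) from rfl, Hset_empty x b hx, dl_empty]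

lemma Kset_empty (x : ℝ) (b : Bool) (hx : x ∉ c.X) : c.Kset x b = ∅ := by
  rw [show c.Kset x b = tr (k0 x b) (c.Hset x b) from rfl, Hset_empty x b hx, tr_empty]

lemma JU_meas (hc : c.X.Countable) : MeasurableSet c.JU := by
  have he : c.JU = ⋃ x ∈ c.X, ⋃ b, c.Jset x b := by
    apply iUnion_reduceX (fun x => ⋃ b, c.Jset x b)
    intro x hx
    simp [Jset_empty x _ hx]
  rw [he]
  exact MeasurableSet.biUnion hc fun x _ => MeasurableSet.iUnion fun b => Jset_meas x b

lemma CC_meas (hc : c.X.Countable) (x : ℝ) (b : Bool) (k : ℕ) : MeasurableSet (c.CC x b k) := by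
  induction k with
  | zero => exact Kset_meas x b
  | succ k ih =>
      rw [CC_succ]
      exact measurable_tr _ (measurable_dl _ (ih.diff (JU_meas hc)))

lemma TU_meas (hc : c.X.Countable) : MeasurableSet c.TU := by
  have he : c.TU = ⋃ x ∈ c.X, ⋃ b, ⋃ k, c.CC x b k := by
    apply iUnion_reduceX (fun x => ⋃ b, ⋃ k, c.CC x b k)
    intro x hx
    simp [CC_empty x _ hx]
  rw [he]
  exact MeasurableSet.biUnion hc fun x _ =>
    MeasurableSet.iUnion fun b => MeasurableSet.iUnion fun k => CC_meas hc x b k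

lemma GG_meas (hc : c.X.Countable) (x : ℝ) (b : Bool) (k : ℕ) : MeasurableSet (c.GG x b k) := by
  induction k with
  | zero =>
      rw [GG_zero]
      exact (Jset_meas x b).diff (TU_meas hc)
  | succ k ih =>
      rw [GG_succ]
      exact measurable_dl _ (measurable_tr _ ih)

lemma RemU_eq : (⋃ i, c.Rem i) = c.TU ∪ ⋃ x, ⋃ b, ⋃ k, c.GG x b k := by
  apply Set.Subset.antisymm
  · refine iUnion_subset ?_
    rintro (⟨⟨x,b⟩,k,o⟩ | ⟨⟨x,b⟩,k⟩)
    · have hsub : c.Rem (.inl ((x,b),k,o)) ⊆ c.CC x b k := by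
        rcases o with _ | ⟨y,c'⟩ <;> [exact diff_subset; exact inter_subset_left]
      intro t ht
      exact Or.inl (mem_iUnion.2 ⟨x, mem_iUnion.2 ⟨b, mem_iUnion.2 ⟨k, hsub ht⟩⟩⟩)
    · intro t ht
      exact Or.inr (mem_iUnion.2 ⟨x, mem_iUnion.2 ⟨b, mem_iUnion.2 ⟨k,
        (by exact ht : t ∈ c.GG x b k)⟩⟩⟩)
  · rintro t (ht | ht)
    · obtain ⟨x, hx⟩ := mem_iUnion.1 ht
      obtain ⟨b, hb⟩ := mem_iUnion.1 hx
      obtain ⟨k, hk⟩ := mem_iUnion.1 hb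
      by_cases hJ : t ∈ c.JU
      · obtain ⟨y, hy⟩ := mem_iUnion.1 hJ
        obtain ⟨c', hc'⟩ := mem_iUnion.1 hy
        exact mem_iUnion.2 ⟨.inl ((x,b),k,some (y,c')), ⟨hk, hc'⟩⟩
      · exact mem_iUnion.2 ⟨.inl ((x,b),k,none), ⟨hk, hJ⟩⟩
    · obtain ⟨x, hx⟩ := mem_iUnion.1 ht
      obtain ⟨b, hb⟩ := mem_iUnion.1 hx
      obtain ⟨k, hk⟩ := mem_iUnion.1 hb
      exact mem_iUnion.2 ⟨.inr ((x,b),k), hk⟩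

lemma RemU_meas (hc : c.X.Countable) : MeasurableSet (⋃ i, c.Rem i) := by
  rw [RemU_eq]
  refine (TU_meas hc).union ?_
  have he : (⋃ x, ⋃ b, ⋃ k, c.GG x b k) = ⋃ x ∈ c.X, ⋃ b, ⋃ k, c.GG x b k := by
    apply iUnion_reduceX (fun x => ⋃ b, ⋃ k, c.GG x b k)
    intro x hx
    simp [GG_empty x _ hx]
  rw [he]
  exact MeasurableSet.biUnion hc fun x _ =>
    MeasurableSet.iUnion fun b => MeasurableSet.iUnion fun k => GG_meas hc x b k

lemma AddE_meas (hc : c.X.Countable) : MeasurableSet c.AddE := by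
  refine MeasurableSet.union (MeasurableSet.union ?_ ?_) ?_
  · have he : (⋃ x, ⋃ b, c.Hset x b) = ⋃ x ∈ c.X, ⋃ b, c.Hset x b := by
      apply iUnion_reduceX (fun x => ⋃ b, c.Hset x b)
      intro x hx
      simp [Hset_empty x _ hx]
    rw [he]
    exact MeasurableSet.biUnion hc fun x _ => MeasurableSet.iUnion fun b => Hset_meas x b
  · have he : (⋃ x, ⋃ b, ⋃ k, dl (-(c.NN x b (k+1) : ℤ)) (c.CC x b k \ c.JU)) =
        ⋃ x ∈ c.X, ⋃ b, ⋃ k, dl (-(c.NN x b (k+1) : ℤ)) (c.CC x b k \ c.JU) := by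
      apply iUnion_reduceX
      intro x hx
      simp [CC_empty x _ hx, dl_empty]
    rw [he]
    exact MeasurableSet.biUnion hc fun x _ => MeasurableSet.iUnion fun b =>
      MeasurableSet.iUnion fun k => measurable_dl _ ((CC_meas hc x b k).diff (JU_meas hc))
  · have he : (⋃ x, ⋃ b, ⋃ k, tr (c.MM x b (k+1)) (c.GG x b k)) =
        ⋃ x ∈ c.X, ⋃ b, ⋃ k, tr (c.MM x b (k+1)) (c.GG x b k) := by
      apply iUnion_reduceX
      intro x hx
      simp [GG_empty x _ hx, tr_empty]
    rw [he]
    exact MeasurableSet.biUnion hc fun x _ => MeasurableSet.iUnion fun b =>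
      MeasurableSet.iUnion fun k => measurable_tr _ (GG_meas hc x b k)

lemma W0_meas : MeasurableSet W0 := measurableSet_Ico.union measurableSet_Ico

lemma Wcon_meas (hc : c.X.Countable) : MeasurableSet c.Wcon := by
  have : c.Wcon = (W0 \ ⋃ i, c.Rem i) ∪ c.AddE := by
    rw [show c.Wcon = (W0 \ ⋃ i, c.Rem i) ∪ ⋃ i, tr (c.mT i) (c.Rem i) from rfl, addT_eq]
  rw [this]
  exact (W0_meas.diff (RemU_meas hc)).union (AddE_meas hc)

-- ## tiling of the constructed set

lemma Wcon_tilesT (g : Good c) (ξ : ℝ) : ∃! k : ℤ, ξ + (k:ℝ) ∈ c.Wcon :=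
  surgeryT c.Rem c.mT (Rem_sub_W0 g) (fun i i' t hne h1 h2 => Rem_disj g i i' t hne h1 h2) ξ

lemma Wcon_tilesD (g : Good c) (ξ : ℝ) (hξ : ξ ≠ 0) : ∃! j : ℤ, (2:ℝ)^j * ξ ∈ c.Wcon := by
  have h := surgeryD c.Rem c.pD (Rem_sub_W0 g)
    (fun i i' t hne h1 h2 => Rem_disj g i i' t hne h1 h2) ξ hξ
  have he : c.Wcon = (W0 \ ⋃ i, c.Rem i) ∪ ⋃ i, dl (c.pD i) (c.Rem i) := by
    rw [show c.Wcon = (W0 \ ⋃ i, c.Rem i) ∪ ⋃ i, tr (c.mT i) (c.Rem i) from rfl,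
      addT_eq, addD_eq]
  rw [he]
  exact h

lemma Hset_sub_Wcon (x : ℝ) (b : Bool) : c.Hset x b ⊆ c.Wcon := by
  intro t ht
  refine Or.inr ?_
  rw [addT_eq]
  exact Or.inl (Or.inl (mem_iUnion.2 ⟨x, mem_iUnion.2 ⟨b, ht⟩⟩))

end Cfg

-- ## bounds on the translation marks

lemma tmark_bound {x : ℝ} (hx : ∀ n : ℤ, x ≠ (n:ℝ)) (b : Bool) : |tmark x b| < 1 := by
  have key : ∀ τ : ℝ, -1 ≤ τ → τ ≤ 1 → (∀ n : ℤ, τ ≠ (n:ℝ)) → |τ| < 1 := by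
    intro τ h1 h2 h3
    rw [abs_lt]
    constructor
    · rcases eq_or_lt_of_le h1 with he | hl
      · exact absurd (by rw [← he]; push_cast; ring : τ = ((-1 : ℤ):ℝ)) (h3 (-1))
      · exact hl
    · rcases eq_or_lt_of_le h2 with he | hl
      · exact absurd (by rw [he]; push_cast; ring : τ = ((1 : ℤ):ℝ)) (h3 1)
      · exact hl
  have hτint : ∀ n : ℤ, tmark x b ≠ (n:ℝ) := by
    intro n he
    apply hx (n - k0 x b)
    simp only [tmark] at he
    push_cast
    linarith
  cases b
  · -- left half
    have hw := wL_pos x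
    have hmem : ∀ θ : ℝ, 0 < θ → θ < wL x → (x - θ) + (kL x : ℝ) ∈ W0 := by
      intro θ h1 h2
      exact hKL x (x - θ) (by linarith) (by linarith)
    have hub : tmark x false ≤ 1 := by
      by_contra hc
      push_neg at hc
      set θ := min (wL x / 2) ((tmark x false - 1)/2) with hθ
      have hθ0 : 0 < θ := lt_min (by linarith) (by simp only [tmark] at hc ⊢; linarith)
      have hθw : θ < wL x := lt_of_le_of_lt (min_le_left _ _) (by linarith)
      have := W0_bounds (hmem θ hθ0 hθw)
      have hθ2 : θ ≤ (tmark x false - 1)/2 := min_le_right _ _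
      simp only [tmark, k0, if_false, Bool.false_eq_true] at hc hθ2
      linarith [this.2]
    have hlb : -1 ≤ tmark x false := by
      have := W0_bounds (hmem (wL x / 2) (by linarith) (by linarith))
      simp only [tmark, k0, if_false, Bool.false_eq_true] at *
      linarith [this.1]
    exact key _ hlb hub hτint
  · have hw := wR_pos x
    have hmem : ∀ θ : ℝ, 0 < θ → θ < wR x → (x + θ) + (kR x : ℝ) ∈ W0 := by
      intro θ h1 h2
      exact hKR x (x + θ) (by linarith) (by linarith)
    have hub : tmark x true < 1 := by
      have := W0_bounds (hmem (wR x / 2) (by linarith) (by linarith))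
      simp only [tmark, k0, if_true] at *
      linarith [this.2]
    have hlb : -1 ≤ tmark x true := by
      by_contra hc
      push_neg at hc
      set θ := min (wR x / 2) ((-1 - tmark x true)/2) with hθ
      have hθ0 : 0 < θ := lt_min (by linarith) (by simp only [tmark] at hc ⊢; linarith)
      have hθw : θ < wR x := lt_of_le_of_lt (min_le_left _ _) (by linarith)
      have := W0_bounds (hmem θ hθ0 hθw)
      have hθ2 : θ ≤ (-1 - tmark x true)/2 := min_le_right _ _
      simp only [tmark, k0, if_true] at hc hθ2
      linarith [this.1]
    exact key _ hlb (le_of_lt hub) hτint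

end

end WS

open MeasureTheory

open WS Set in
set_option maxHeartbeats 1000000 in
theorem stmt_12 (X : Set ℝ) (hfin : X.Finite)
    (hXZ : ∀ x ∈ X, ∀ n : ℤ, x ≠ (n : ℝ))
    (hXtrans : ∀ k : ℤ, k ≠ 0 → ∀ x ∈ X, x + (k : ℝ) ∉ X)
    (hXdil : ∀ j : ℤ, j ≠ 0 → ∀ x ∈ X, (2 : ℝ) ^ j * x ∉ X) :
    ∃ δ > (0 : ℝ), ∀ ε : ℝ → ℝ, (∀ x ∈ X, 0 < ε x ∧ ε x < δ) →
      ∃ W : Set ℝ, IsWaveletSet W ∧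
        (⋃ x ∈ X, Set.Ioo (x - ε x) (x + ε x)) ⊆ W := by
  classical
  set F := hfin.toFinset with hF
  have hmemF : ∀ x, x ∈ F ↔ x ∈ X := fun x => hfin.mem_toFinset
  set L := F.sort (· ≤ ·) with hL
  set nidx : ℝ → ℕ := fun t => L.idxOf t with hnidx
  set nn : ℕ := L.length + 1 with hnn
  have hnidxlt : ∀ x ∈ X, nidx x < nn := by
    intro x hx
    have hxl : x ∈ L := (Finset.mem_sort _).2 ((hmemF x).2 hx)
    have h2 := List.idxOf_lt_length_iff.2 hxl
    show List.idxOf x L < L.length + 1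
    omega
  have hnidxinj : ∀ x ∈ X, ∀ y ∈ X, x ≠ y → nidx x ≠ nidx y := by
    intro x hx y hy hxy he
    have hx' : x ∈ L := (Finset.mem_sort _).2 ((hmemF x).2 hx)
    have hy' : y ∈ L := (Finset.mem_sort _).2 ((hmemF y).2 hy)
    exact hxy ((List.idxOf_inj (y := y) hx').1 he)
  -- the marks
  set MK : Set ℝ := (fun x => tmark x true) '' X ∪ (fun x => tmark x false) '' X ∪
    ((fun x => dmark x true) '' X ∪ (fun x => dmark x false) '' X) with hMK
  have hMKfin : MK.Finite :=
    ((hfin.image _).union (hfin.image _)).union ((hfin.image _).union (hfin.image _))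
  obtain ⟨r₀, hr₀3, haaMK⟩ := avoid_finite hMKfin
  set aa : ℝ := 1/2 + (2:ℝ)^(-(r₀:ℤ)) with haa
  obtain ⟨γ, hγ0, hγ⟩ := finite_gap (hMKfin.union (Set.finite_singleton aa))
  have hτMK' : ∀ x ∈ X, ∀ b, tmark x b ∈ MK := by
    intro x hx b
    cases b
    · exact Or.inl (Or.inr ⟨x, hx, rfl⟩)
    · exact Or.inl (Or.inl ⟨x, hx, rfl⟩)
  have hdMK' : ∀ x ∈ X, ∀ b, dmark x b ∈ MK := by
    intro x hx b
    cases b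
    · exact Or.inr (Or.inr ⟨x, hx, rfl⟩)
    · exact Or.inr (Or.inl ⟨x, hx, rfl⟩)
  have hτMK : ∀ x ∈ X, ∀ b, tmark x b ∈ MK ∪ {aa} := fun x hx b => Or.inl (hτMK' x hx b)
  have hdMK : ∀ x ∈ X, ∀ b, dmark x b ∈ MK ∪ {aa} := fun x hx b => Or.inl (hdMK' x hx b)
  have haaMem : aa ∈ MK ∪ {aa} := Or.inr rfl
  -- N₀
  set V1 : Finset ℝ := (F.image (fun x => 1 - |tmark x true|) ∪
    F.image (fun x => 1 - |tmark x false|)) ∪ {(1/8 : ℝ)} with hV1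
  have hV1ne : V1.Nonempty := ⟨1/8, by simp [hV1]⟩
  have hV1pos : ∀ v ∈ V1, 0 < v := by
    intro v hv
    simp only [hV1, Finset.mem_union, Finset.mem_image, Finset.mem_singleton] at hv
    rcases hv with (⟨x, hx, he⟩ | ⟨x, hx, he⟩) | he
    · rw [← he]
      have := tmark_bound (hXZ x ((hmemF x).1 hx)) true
      linarith
    · rw [← he]
      have := tmark_bound (hXZ x ((hmemF x).1 hx)) false
      linarith
    · rw [he]; norm_num
  set γ₁ : ℝ := V1.min' hV1ne with hγ₁
  have hγ₁0 : 0 < γ₁ := hV1pos _ (V1.min'_mem hV1ne)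
  have hγ₁τ : ∀ x ∈ X, ∀ b, γ₁ ≤ 1 - |tmark x b| := by
    intro x hx b
    apply V1.min'_le
    cases b
    · exact Finset.mem_union_left _ (Finset.mem_union_right _
        (Finset.mem_image.2 ⟨x, (hmemF x).2 hx, rfl⟩))
    · exact Finset.mem_union_left _ (Finset.mem_union_left _
        (Finset.mem_image.2 ⟨x, (hmemF x).2 hx, rfl⟩))
  obtain ⟨N₁, -, hN₁⟩ := exists_small_pow (show (0:ℝ) < γ₁/2 by linarith)
  set N₀ : ℕ := max 3 N₁ with hN₀
  have hN₀γ : (2:ℝ)^(-(N₀:ℤ)) ≤ γ₁/2 := by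
    refine le_trans ?_ hN₁
    apply zpow_le_zpow_right₀ (by norm_num)
    have : N₁ ≤ N₀ := le_max_right _ _
    omega
  -- m₀
  obtain ⟨M₁, -, hM₁⟩ := exists_small_pow (show (0:ℝ) < min (γ/6) (1/24) by
    apply lt_min <;> linarith)
  set m₀ : ℕ := max r₀ M₁ with hm₀
  have hm₀le : (2:ℝ)^(-(m₀:ℤ)) ≤ min (γ/6) (1/24) := by
    refine le_trans ?_ hM₁
    apply zpow_le_zpow_right₀ (by norm_num)
    have : M₁ ≤ m₀ := le_max_right _ _
    omega
  have hm₀γ : 3*(2:ℝ)^(-(m₀:ℤ)) ≤ γ/2 := by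
    have := le_trans hm₀le (min_le_left _ _)
    linarith
  have hm₀8 : 3*(2:ℝ)^(-(m₀:ℤ)) ≤ 1/8 := by
    have := le_trans hm₀le (min_le_right _ _)
    linarith
  have haa58 : aa ≤ 5/8 := by
    have : (2:ℝ)^(-(r₀:ℤ)) ≤ (2:ℝ)^(-(3:ℤ)) := by
      apply zpow_le_zpow_right₀ (by norm_num)
      omega
    rw [haa]
    norm_num at this ⊢
    linarith
  -- δ
  set V : Finset ℝ := ({1/4, γ/2, γ₁/2} : Finset ℝ) ∪ F.image wR ∪ F.image wL ∪
    F.image wDR ∪ F.image wDL ∪ F.image (fun x => (2:ℝ)^(-(jR x)) * (γ/2)) ∪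
    F.image (fun x => (2:ℝ)^(-(jL x)) * (γ/2)) with hV
  have hVmem14 : (1/4 : ℝ) ∈ V := by
    simp [hV]
  have hVne : V.Nonempty := ⟨1/4, hVmem14⟩
  have hVpos : ∀ v ∈ V, 0 < v := by
    intro v hv
    simp only [hV, Finset.mem_union, Finset.mem_image, Finset.mem_insert,
      Finset.mem_singleton] at hv
    rcases hv with ((((((he | he | he) | ⟨x,hx,he⟩) | ⟨x,hx,he⟩) | ⟨x,hx,he⟩) | ⟨x,hx,he⟩) |
      ⟨x,hx,he⟩) | ⟨x,hx,he⟩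
    · rw [he]; norm_num
    · rw [he]; linarith
    · rw [he]; linarith
    · rw [← he]; exact wR_pos x
    · rw [← he]; exact wL_pos x
    · rw [← he]; exact wDR_pos x
    · rw [← he]; exact wDL_pos x
    · rw [← he]; exact mul_pos (zpow_pos (by norm_num) _) (by linarith)
    · rw [← he]; exact mul_pos (zpow_pos (by norm_num) _) (by linarith)
  set δ : ℝ := V.min' hVne with hδ
  have hδpos : 0 < δ := hVpos _ (V.min'_mem hVne)
  have hδle : ∀ v ∈ V, δ ≤ v := fun v hv => V.min'_le v hv
  have hδ14 : δ ≤ 1/4 := hδle _ hVmem14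
  have hδγ : δ ≤ γ/2 := hδle _ (by simp [hV])
  have hδγ₁ : δ ≤ γ₁/2 := hδle _ (by simp [hV])
  have hδwR : ∀ x ∈ X, δ ≤ wR x := fun x hx => hδle _ (by
    simp only [hV, Finset.mem_union]
    exact Or.inl (Or.inl (Or.inl (Or.inl (Or.inl (Or.inr
      (Finset.mem_image.2 ⟨x, (hmemF x).2 hx, rfl⟩)))))))
  have hδwL : ∀ x ∈ X, δ ≤ wL x := fun x hx => hδle _ (by
    simp only [hV, Finset.mem_union]
    exact Or.inl (Or.inl (Or.inl (Or.inl (Or.inr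
      (Finset.mem_image.2 ⟨x, (hmemF x).2 hx, rfl⟩))))))
  have hδwDR : ∀ x ∈ X, δ ≤ wDR x := fun x hx => hδle _ (by
    simp only [hV, Finset.mem_union]
    exact Or.inl (Or.inl (Or.inl (Or.inr (Finset.mem_image.2 ⟨x, (hmemF x).2 hx, rfl⟩)))))
  have hδwDL : ∀ x ∈ X, δ ≤ wDL x := fun x hx => hδle _ (by
    simp only [hV, Finset.mem_union]
    exact Or.inl (Or.inl (Or.inr (Finset.mem_image.2 ⟨x, (hmemF x).2 hx, rfl⟩))))
  have hδjR : ∀ x ∈ X, δ ≤ (2:ℝ)^(-(jR x)) * (γ/2) := fun x hx => hδle _ (by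
    simp only [hV, Finset.mem_union]
    exact Or.inl (Or.inr (Finset.mem_image.2 ⟨x, (hmemF x).2 hx, rfl⟩)))
  have hδjL : ∀ x ∈ X, δ ≤ (2:ℝ)^(-(jL x)) * (γ/2) := fun x hx => hδle _ (by
    simp only [hV, Finset.mem_union]
    exact Or.inr (Finset.mem_image.2 ⟨x, (hmemF x).2 hx, rfl⟩))
  have hδj0 : ∀ x ∈ X, ∀ b, (2:ℝ)^(j0 x b) * δ ≤ γ/2 := by
    intro x hx b
    have hp : (0:ℝ) < (2:ℝ)^(j0 x b) := zpow_pos (by norm_num) _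
    have hmul : (2:ℝ)^(j0 x b) * (2:ℝ)^(-(j0 x b)) = 1 := by
      rw [← zpow_add₀ (by norm_num : (2:ℝ) ≠ 0)]; simp
    have hdle : δ ≤ (2:ℝ)^(-(j0 x b)) * (γ/2) := by
      cases b
      · simpa [j0] using hδjL x hx
      · simpa [j0] using hδjR x hx
    calc (2:ℝ)^(j0 x b) * δ ≤ (2:ℝ)^(j0 x b) * ((2:ℝ)^(-(j0 x b)) * (γ/2)) := by
          exact mul_le_mul_of_nonneg_left hdle hp.le
      _ = γ/2 := by rw [← mul_assoc, hmul, one_mul]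
  clear_value V1 γ₁ V δ
  refine ⟨δ, hδpos, ?_⟩
  intro ε hε
  set c : WS.Cfg := ⟨X, ε, nidx, nn, N₀, m₀, r₀⟩ with hc
  have haaeq : c.aa = aa := rfl
  have hεδ : ∀ x ∈ X, ε x < δ := fun x hx => (hε x hx).2
  have hε0 : ∀ x ∈ X, 0 < ε x := fun x hx => (hε x hx).1
  have g : WS.Good c := by
    constructor
    case fin => exact hfin
    case notint => exact hXZ
    case epos => exact hε0
    case e14 => intro x hx; linarith [hεδ x hx, hδ14]
    case eT =>
      intro x hx b
      cases b
      · calc ε x < δ := hεδ x hx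
          _ ≤ wL x := hδwL x hx
      · calc ε x < δ := hεδ x hx
          _ ≤ wR x := hδwR x hx
    case eD =>
      intro x hx b
      cases b
      · calc ε x < δ := hεδ x hx
          _ ≤ wDL x := hδwDL x hx
      · calc ε x < δ := hεδ x hx
          _ ≤ wDR x := hδwDR x hx
    case markinjT =>
      intro x hx y hy b b' hxy he
      simp only [tmark] at he
      by_cases hk : k0 x b = k0 y b'
      · rw [hk] at he
        exact hxy (by linarith)
      · have hne : k0 x b - k0 y b' ≠ 0 := fun h => hk (by omega)
        apply hXtrans (k0 x b - k0 y b') hne x hx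
        have : x + ((k0 x b - k0 y b' : ℤ):ℝ) = y := by push_cast; linarith
        rw [this]
        exact hy
    case markinjD =>
      intro x hx y hy b b' hxy he
      simp only [dmark] at he
      have hp : (0:ℝ) < (2:ℝ)^(j0 y b') := zpow_pos (by norm_num) _
      by_cases hj : j0 x b = j0 y b'
      · rw [hj] at he
        exact hxy (mul_left_cancel₀ (ne_of_gt hp) he)
      · have hne : j0 x b - j0 y b' ≠ 0 := fun h => hj (by omega)
        apply hXdil (j0 x b - j0 y b') hne x hx
        have heq2 : (2:ℝ)^(j0 x b - j0 y b') * x = y := by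
          rw [zpow_sub₀ (by norm_num : (2:ℝ) ≠ 0), div_mul_eq_mul_div, he, mul_comm,
            mul_div_assoc, div_self (ne_of_gt hp), mul_one]
        rw [heq2]
        exact hy
    case gapT =>
      intro x hx y hy b b' hne
      have := hγ _ (hτMK x hx b) _ (hτMK y hy b') hne
      have h1 := hεδ x hx
      have h2 := hεδ y hy
      linarith
    case gapD =>
      intro x hx y hy b b' hne
      have := hγ _ (hdMK x hx b) _ (hdMK y hy b') hne
      have h1 : (2:ℝ)^(j0 x b) * c.eps x ≤ γ/2 := by
        have hp : (0:ℝ) < (2:ℝ)^(j0 x b) := zpow_pos (by norm_num) _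
        have := mul_le_mul_of_nonneg_left (le_of_lt (hεδ x hx)) hp.le
        linarith [hδj0 x hx b]
      have h2 : (2:ℝ)^(j0 y b') * c.eps y ≤ γ/2 := by
        have hp : (0:ℝ) < (2:ℝ)^(j0 y b') := zpow_pos (by norm_num) _
        have := mul_le_mul_of_nonneg_left (le_of_lt (hεδ y hy)) hp.le
        linarith [hδj0 y hy b']
      linarith
    case tau1 =>
      intro x hx b
      have h1 := hγ₁τ x hx b
      have h2 := hεδ x hx
      have h3 := hN₀γ
      show |tmark x b| + ε x < 1 - (2:ℝ)^(-(N₀:ℤ))/2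
      linarith
    case KJB =>
      intro x hx b
      have hτmk := hτMK' x hx b
      have hτne : tmark x b ≠ aa := fun he => haaMK (he ▸ hτmk)
      have hgap := hγ _ (Or.inl hτmk) _ haaMem hτne
      have hεx := hεδ x hx
      show tmark x b + ε x ≤ c.aa ∨ c.aa + 3*(2:ℝ)^(-(m₀:ℤ)) ≤ tmark x b - ε x
      rw [haaeq]
      rcases abs_cases (tmark x b - aa) with ⟨he, -⟩ | ⟨he, -⟩
      · right
        rw [he] at hgap
        linarith [hm₀γ, hδγ]
      · left
        rw [he] at hgap
        linarith [hδγ]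
    case JJB =>
      intro x hx b
      have hdmk := hdMK' x hx b
      have hdne : dmark x b ≠ aa := fun he => haaMK (he ▸ hdmk)
      have hgap := hγ _ (Or.inl hdmk) _ haaMem hdne
      have hrx : (2:ℝ)^(j0 x b) * ε x ≤ γ/2 := by
        have hp : (0:ℝ) < (2:ℝ)^(j0 x b) := zpow_pos (by norm_num) _
        have h2 := mul_le_mul_of_nonneg_left (le_of_lt (hεδ x hx)) hp.le
        linarith [hδj0 x hx b]
      have hrx0 : (0:ℝ) ≤ (2:ℝ)^(j0 x b) * ε x := by
        have hp : (0:ℝ) < (2:ℝ)^(j0 x b) := zpow_pos (by norm_num) _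
        have := hε0 x hx
        positivity
      show dmark x b + (2:ℝ)^(j0 x b) * ε x ≤ c.aa ∨
        c.aa + 3*(2:ℝ)^(-(m₀:ℤ)) ≤ dmark x b - (2:ℝ)^(j0 x b) * ε x
      rw [haaeq]
      rcases abs_cases (dmark x b - aa) with ⟨he, -⟩ | ⟨he, -⟩
      · right
        rw [he] at hgap
        linarith [hm₀γ]
      · left
        rw [he] at hgap
        linarith
    case aa34 =>
      show c.aa + 3*(2:ℝ)^(-(m₀:ℤ)) ≤ 3/4
      rw [haaeq]
      linarith
    case N03 => exact le_max_left _ _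
    case m0r0 => exact le_max_left _ _
    case r03 => exact hr₀3
    case nidxinj => exact hnidxinj
    case nidxlt => exact hnidxlt
    case nn1 => exact Nat.succ_le_succ (Nat.zero_le _)
  have hcnt : c.X.Countable := hfin.countable
  refine ⟨c.Wcon ∪ X, ⟨?_, ?_, ?_⟩, ?_⟩
  · exact (WS.Cfg.Wcon_meas hcnt).union (hfin.countable.measurableSet)
  · -- translations
    have hbadc : (⋃ k : ℤ, (fun ξ : ℝ => ξ + (k:ℝ)) ⁻¹' X).Countable :=
      Set.countable_iUnion (fun k => hfin.countable.preimage (add_left_injective _))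
    have hbad0 : volume (⋃ k : ℤ, (fun ξ : ℝ => ξ + (k:ℝ)) ⁻¹' X) = 0 :=
      hbadc.measure_zero _
    have hae := measure_eq_zero_iff_ae_notMem.1 hbad0
    filter_upwards [hae] with ξ hξ
    have hnX : ∀ k : ℤ, ξ + (k:ℝ) ∉ X := by
      intro k hk
      exact hξ (mem_iUnion.2 ⟨k, hk⟩)
    obtain ⟨k₀, hk₀, hu⟩ := WS.Cfg.Wcon_tilesT g ξ
    refine ⟨k₀, Or.inl hk₀, ?_⟩
    rintro k (hk | hk)
    · exact hu k hk
    · exact absurd hk (hnX k)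
  · -- dilations
    have hbadc : ({(0:ℝ)} ∪ ⋃ j : ℤ, (fun ξ : ℝ => (2:ℝ)^j * ξ) ⁻¹' X).Countable :=
      (Set.countable_singleton 0).union (Set.countable_iUnion (fun j =>
        hfin.countable.preimage (mul_right_injective₀ (a := (2:ℝ)^j) (by positivity))))
    have hbad0 : volume ({(0:ℝ)} ∪ ⋃ j : ℤ, (fun ξ : ℝ => (2:ℝ)^j * ξ) ⁻¹' X) = 0 :=
      hbadc.measure_zero _
    have hae := measure_eq_zero_iff_ae_notMem.1 hbad0
    filter_upwards [hae] with ξ hξ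
    have hξ0 : ξ ≠ 0 := fun h => hξ (Or.inl (by simp [h]))
    have hnX : ∀ j : ℤ, (2:ℝ)^j * ξ ∉ X := fun j hj => hξ (Or.inr (mem_iUnion.2 ⟨j, hj⟩))
    obtain ⟨j₀, hj₀, hu⟩ := WS.Cfg.Wcon_tilesD g ξ hξ0
    refine ⟨j₀, Or.inl hj₀, ?_⟩
    rintro j (hj | hj)
    · exact hu j hj
    · exact absurd hj (hnX j)
  · -- inclusion
    intro t ht
    simp only [mem_iUnion, mem_Ioo] at ht
    obtain ⟨x, hx, h1, h2⟩ := ht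
    rcases lt_trichotomy t x with hlt | heq | hgt
    · refine Or.inl (WS.Cfg.Hset_sub_Wcon x false ?_)
      show t ∈ c.Hset x false
      rw [show c.Hset x false =
        if x ∈ c.X then Set.Ioo (x - c.eps x) x else ∅ from by
          simp [WS.Cfg.Hset], if_pos (show x ∈ c.X from hx)]
      exact ⟨h1, hlt⟩
    · exact Or.inr (heq ▸ hx)
    · refine Or.inl (WS.Cfg.Hset_sub_Wcon x true ?_)
      show t ∈ c.Hset x true
      rw [show c.Hset x true =
        if x ∈ c.X then Set.Ioo x (x + c.eps x) else ∅ from by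
          simp [WS.Cfg.Hset], if_pos (show x ∈ c.X from hx)]
      exact ⟨hgt, h2⟩
end

section
/- Let F be any subset of [1/3, 2/3] and let G = [1/3, 2/3] \ F. Then the set S = F ∪ 2·G ∪ (G − 1) ∪ 2·(F − 1) satisfies: for Lebesgue-almost every ξ ∈ ℝ there is exactly one k ∈ ℤ with ξ + k ∈ S and exactly one j ∈ ℤ with 2^j ξ ∈ S. In particular, if F is not Lebesgue measurable, then S is a non-measurable set that tiles ℝ both by integer translations and by dyadic dilations. -/
open MeasureTheory Set

namespace Stmt13Aux

/-- The tiling set built from `F`. -/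
def Sof (F : Set ℝ) : Set ℝ :=
  F ∪ ((fun x : ℝ => 2 * x) '' (Set.Icc (1/3 : ℝ) (2/3) \ F)) ∪
    ((fun x : ℝ => x - 1) '' (Set.Icc (1/3 : ℝ) (2/3) \ F)) ∪
    ((fun x : ℝ => 2 * (x - 1)) '' F)

lemma int_d_eq (m : ℤ) (k₁ k₂ : ℤ) (h1 : (m:ℝ) - 1 < (k₁:ℝ) - (k₂:ℝ))
    (h2 : (k₁:ℝ) - (k₂:ℝ) < (m:ℝ) + 1) : k₁ = k₂ + m := by
  have a1 : ((m - 1 : ℤ):ℝ) < ((k₁ - k₂ : ℤ):ℝ) := by push_cast; linarith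
  have a2 : ((k₁ - k₂ : ℤ):ℝ) < ((m + 1 : ℤ):ℝ) := by push_cast; linarith
  have b1 : m - 1 < k₁ - k₂ := by exact_mod_cast a1
  have b2 : k₁ - k₂ < m + 1 := by exact_mod_cast a2
  omega

lemma int_d_false (m : ℤ) (k₁ k₂ : ℤ) (h1 : (m:ℝ) < (k₁:ℝ) - (k₂:ℝ))
    (h2 : (k₁:ℝ) - (k₂:ℝ) < (m:ℝ) + 1) : False := by
  have a1 : ((m : ℤ):ℝ) < ((k₁ - k₂ : ℤ):ℝ) := by push_cast; linarith
  have a2 : ((k₁ - k₂ : ℤ):ℝ) < ((m + 1 : ℤ):ℝ) := by push_cast; linarith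
  have b1 : m < k₁ - k₂ := by exact_mod_cast a1
  have b2 : k₁ - k₂ < m + 1 := by exact_mod_cast a2
  omega

lemma mono_pos {x : ℝ} (hx : 0 ≤ x) {i j : ℤ} (h : i ≤ j) :
    (2:ℝ)^i * x ≤ (2:ℝ)^j * x :=
  mul_le_mul_of_nonneg_right (zpow_le_zpow_right₀ one_le_two h) hx

lemma mono_neg {x : ℝ} (hx : x ≤ 0) {i j : ℤ} (h : i ≤ j) :
    (2:ℝ)^j * x ≤ (2:ℝ)^i * x := by
  have := mono_pos (x := -x) (by linarith) h
  linarith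

lemma step (i : ℤ) (x : ℝ) : (2:ℝ)^(i+1) * x = 2 * ((2:ℝ)^i * x) := by
  rw [zpow_add_one₀ (two_ne_zero)]; ring

lemma gap {x : ℝ} (hx : 0 < x) {i j : ℤ} (h : i + 1 ≤ j) :
    2 * ((2:ℝ)^i * x) ≤ (2:ℝ)^j * x := by
  have := mono_pos hx.le h
  rw [step] at this; linarith

lemma gap_neg {x : ℝ} (hx : x < 0) {i j : ℤ} (h : i + 1 ≤ j) :
    (2:ℝ)^j * x ≤ 2 * ((2:ℝ)^i * x) := by
  have := gap (x := -x) (by linarith) h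
  linarith

lemma mem_Sof_iff (F : Set ℝ) (hF : F ⊆ Set.Icc (1/3 : ℝ) (2/3)) {x : ℝ}
    (hx : Irrational x) :
    x ∈ Sof F ↔
      (x ∈ Set.Ioo (1/3 : ℝ) (2/3) ∧ x ∈ F) ∨
      (x ∈ Set.Ioo (2/3 : ℝ) (4/3) ∧ x/2 ∈ Set.Icc (1/3 : ℝ) (2/3) \ F) ∨
      (x ∈ Set.Ioo (-(2/3) : ℝ) (-(1/3)) ∧ x + 1 ∈ Set.Icc (1/3 : ℝ) (2/3) \ F) ∨
      (x ∈ Set.Ioo (-(4/3) : ℝ) (-(2/3)) ∧ x/2 + 1 ∈ F) := by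
  have key : ∀ (q : ℚ) (r : ℝ), (q:ℝ) = r → x ≠ r := fun q r hq e => hx ⟨q, by rw [hq, e]⟩
  have e1 : x ≠ 1/3 := key (1/3) _ (by norm_num)
  have e2 : x ≠ 2/3 := key (2/3) _ (by norm_num)
  have e3 : x ≠ 4/3 := key (4/3) _ (by norm_num)
  have e4 : x ≠ -(1/3) := key (-(1/3)) _ (by norm_num)
  have e5 : x ≠ -(2/3) := key (-(2/3)) _ (by norm_num)
  have e6 : x ≠ -(4/3) := key (-(4/3)) _ (by norm_num)
  constructor
  · intro h
    rcases h with ((h | ⟨g, hg, rfl⟩) | ⟨g, hg, rfl⟩) | ⟨f, hf, rfl⟩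
    · left
      refine ⟨⟨?_, ?_⟩, h⟩
      · exact lt_of_le_of_ne (hF h).1 (Ne.symm e1)
      · exact lt_of_le_of_ne (hF h).2 e2
    · right; left
      have hg1 := hg.1.1; have hg2 := hg.1.2
      refine ⟨⟨?_, ?_⟩, ?_⟩
      · exact lt_of_le_of_ne (by linarith) (Ne.symm e2)
      · exact lt_of_le_of_ne (by linarith) e3
      · rw [show (2 : ℝ) * g / 2 = g by ring]; exact hg
    · right; right; left
      have hg1 := hg.1.1; have hg2 := hg.1.2
      refine ⟨⟨?_, ?_⟩, ?_⟩
      · exact lt_of_le_of_ne (by linarith) (Ne.symm e5)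
      · exact lt_of_le_of_ne (by linarith) e4
      · rw [show g - 1 + 1 = g by ring]; exact hg
    · right; right; right
      have hf1 := (hF hf).1; have hf2 := (hF hf).2
      refine ⟨⟨?_, ?_⟩, ?_⟩
      · exact lt_of_le_of_ne (by linarith) (Ne.symm e6)
      · exact lt_of_le_of_ne (by linarith) e5
      · rw [show 2 * (f - 1) / 2 + 1 = f by ring]; exact hf
  · rintro (⟨_, h⟩ | ⟨_, h⟩ | ⟨_, h⟩ | ⟨_, h⟩)
    · exact Or.inl (Or.inl (Or.inl h))
    · exact Or.inl (Or.inl (Or.inr ⟨x/2, h, by ring⟩))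
    · exact Or.inl (Or.inr ⟨x + 1, h, by ring⟩)
    · exact Or.inr ⟨x/2 + 1, h, by ring⟩

lemma trans_exu (F : Set ℝ) (hF : F ⊆ Set.Icc (1/3 : ℝ) (2/3)) {ξ : ℝ}
    (hξ : Irrational ξ) : ∃! k : ℤ, ξ + (k:ℝ) ∈ Sof F := by
  have hmem : ∀ k : ℤ, (ξ + (k:ℝ) ∈ Sof F ↔
      (ξ + (k:ℝ) ∈ Set.Ioo (1/3 : ℝ) (2/3) ∧ ξ + (k:ℝ) ∈ F) ∨
      (ξ + (k:ℝ) ∈ Set.Ioo (2/3 : ℝ) (4/3) ∧ (ξ + (k:ℝ))/2 ∈ Set.Icc (1/3 : ℝ) (2/3) \ F) ∨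
      (ξ + (k:ℝ) ∈ Set.Ioo (-(2/3) : ℝ) (-(1/3)) ∧ (ξ + (k:ℝ)) + 1 ∈ Set.Icc (1/3 : ℝ) (2/3) \ F) ∨
      (ξ + (k:ℝ) ∈ Set.Ioo (-(4/3) : ℝ) (-(2/3)) ∧ (ξ + (k:ℝ))/2 + 1 ∈ F)) :=
    fun k => mem_Sof_iff F hF (hξ.add_intCast k)
  have uniq : ∀ k₁ k₂ : ℤ, ξ + (k₁:ℝ) ∈ Sof F → ξ + (k₂:ℝ) ∈ Sof F → k₁ = k₂ := by
    intro k₁ k₂ h₁ h₂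
    rw [hmem] at h₁ h₂
    rcases h₁ with ⟨hI1, hc1⟩ | ⟨hI1, hc1⟩ | ⟨hI1, hc1⟩ | ⟨hI1, hc1⟩ <;>
      rcases h₂ with ⟨hI2, hc2⟩ | ⟨hI2, hc2⟩ | ⟨hI2, hc2⟩ | ⟨hI2, hc2⟩ <;>
      obtain ⟨la, ra⟩ := hI1 <;> obtain ⟨lb, rb⟩ := hI2
    -- (1,1)
    · have := int_d_eq 0 k₁ k₂ (by push_cast; linarith) (by push_cast; linarith); omega
    -- (1,2)
    · exact absurd (int_d_false (-1) k₁ k₂ (by push_cast; linarith) (by push_cast; linarith)) not_false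
    -- (1,3)
    · have hd := int_d_eq 1 k₁ k₂ (by push_cast; linarith) (by push_cast; linarith)
      exfalso
      apply hc2.2
      have he : ξ + (k₂:ℝ) + 1 = ξ + (k₁:ℝ) := by rw [hd]; push_cast; ring
      rw [he]; exact hc1
    -- (1,4)
    · exact absurd (int_d_false 1 k₁ k₂ (by push_cast; linarith) (by push_cast; linarith)) not_false
    -- (2,1)
    · exact absurd (int_d_false 0 k₁ k₂ (by push_cast; linarith) (by push_cast; linarith)) not_false
    -- (2,2)
    · have := int_d_eq 0 k₁ k₂ (by push_cast; linarith) (by push_cast; linarith); omega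
    -- (2,3)
    · exact absurd (int_d_false 1 k₁ k₂ (by push_cast; linarith) (by push_cast; linarith)) not_false
    -- (2,4)
    · have hd := int_d_eq 2 k₁ k₂ (by push_cast; linarith) (by push_cast; linarith)
      exfalso
      apply hc1.2
      have he : (ξ + (k₁:ℝ))/2 = (ξ + (k₂:ℝ))/2 + 1 := by rw [hd]; push_cast; ring
      rw [he]; exact hc2
    -- (3,1)
    · have hd := int_d_eq (-1) k₁ k₂ (by push_cast; linarith) (by push_cast; linarith)
      exfalso
      apply hc1.2
      have he : ξ + (k₁:ℝ) + 1 = ξ + (k₂:ℝ) := by rw [hd]; push_cast; ring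
      rw [he]; exact hc2
    -- (3,2)
    · exact absurd (int_d_false (-2) k₁ k₂ (by push_cast; linarith) (by push_cast; linarith)) not_false
    -- (3,3)
    · have := int_d_eq 0 k₁ k₂ (by push_cast; linarith) (by push_cast; linarith); omega
    -- (3,4)
    · exact absurd (int_d_false 0 k₁ k₂ (by push_cast; linarith) (by push_cast; linarith)) not_false
    -- (4,1)
    · exact absurd (int_d_false (-2) k₁ k₂ (by push_cast; linarith) (by push_cast; linarith)) not_false
    -- (4,2)
    · have hd := int_d_eq (-2) k₁ k₂ (by push_cast; linarith) (by push_cast; linarith)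
      exfalso
      apply hc2.2
      have he : (ξ + (k₂:ℝ))/2 = (ξ + (k₁:ℝ))/2 + 1 := by rw [hd]; push_cast; ring
      rw [he]; exact hc1
    -- (4,3)
    · exact absurd (int_d_false (-1) k₁ k₂ (by push_cast; linarith) (by push_cast; linarith)) not_false
    -- (4,4)
    · have := int_d_eq 0 k₁ k₂ (by push_cast; linarith) (by push_cast; linarith); omega
  have hex : ∃ k : ℤ, ξ + (k:ℝ) ∈ Sof F := by
    set n : ℤ := ⌊ξ⌋ with hn
    have h0 : (n:ℝ) ≤ ξ := Int.floor_le ξ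
    have h1 : ξ < (n:ℝ) + 1 := Int.lt_floor_add_one ξ
    have n13 : ξ - (n:ℝ) ≠ 1/3 := fun e => (hξ.sub_intCast n) ⟨1/3, by rw [e]; norm_num⟩
    have n23 : ξ - (n:ℝ) ≠ 2/3 := fun e => (hξ.sub_intCast n) ⟨2/3, by rw [e]; norm_num⟩
    rcases lt_trichotomy (ξ - (n:ℝ)) (1/3) with hA | hA | hA
    · by_cases hz : (ξ - (n:ℝ) + 1)/2 ∈ F
      · refine ⟨-n - 1, (hmem _).2 (Or.inr (Or.inr (Or.inr ⟨⟨?_, ?_⟩, ?_⟩)))⟩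
        · push_cast; linarith
        · push_cast; linarith
        · rw [show (ξ + ((-n - 1 : ℤ):ℝ))/2 + 1 = (ξ - (n:ℝ) + 1)/2 by push_cast; ring]
          exact hz
      · refine ⟨-n + 1, (hmem _).2 (Or.inr (Or.inl ⟨⟨?_, ?_⟩, ⟨⟨?_, ?_⟩, ?_⟩⟩))⟩
        · push_cast; linarith
        · push_cast; linarith
        · push_cast; linarith
        · push_cast; linarith
        · rw [show (ξ + ((-n + 1 : ℤ):ℝ))/2 = (ξ - (n:ℝ) + 1)/2 by push_cast; ring]
          exact hz
    · exact absurd hA n13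
    · rcases lt_trichotomy (ξ - (n:ℝ)) (2/3) with hB | hB | hB
      · by_cases hy : ξ - (n:ℝ) ∈ F
        · refine ⟨-n, (hmem _).2 (Or.inl ⟨⟨?_, ?_⟩, ?_⟩)⟩
          · push_cast; linarith
          · push_cast; linarith
          · rw [show ξ + ((-n : ℤ):ℝ) = ξ - (n:ℝ) by push_cast; ring]
            exact hy
        · refine ⟨-n - 1, (hmem _).2 (Or.inr (Or.inr (Or.inl ⟨⟨?_, ?_⟩, ⟨⟨?_, ?_⟩, ?_⟩⟩)))⟩
          · push_cast; linarith
          · push_cast; linarith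
          · push_cast; linarith
          · push_cast; linarith
          · rw [show ξ + ((-n - 1 : ℤ):ℝ) + 1 = ξ - (n:ℝ) by push_cast; ring]
            exact hy
      · exact absurd hB n23
      · by_cases hw : (ξ - (n:ℝ))/2 ∈ F
        · refine ⟨-n - 2, (hmem _).2 (Or.inr (Or.inr (Or.inr ⟨⟨?_, ?_⟩, ?_⟩)))⟩
          · push_cast; linarith
          · push_cast; linarith
          · rw [show (ξ + ((-n - 2 : ℤ):ℝ))/2 + 1 = (ξ - (n:ℝ))/2 by push_cast; ring]
            exact hw
        · refine ⟨-n, (hmem _).2 (Or.inr (Or.inl ⟨⟨?_, ?_⟩, ⟨⟨?_, ?_⟩, ?_⟩⟩))⟩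
          · push_cast; linarith
          · push_cast; linarith
          · push_cast; linarith
          · push_cast; linarith
          · rw [show (ξ + ((-n : ℤ):ℝ))/2 = (ξ - (n:ℝ))/2 by push_cast; ring]
            exact hw
  obtain ⟨k₀, hk₀⟩ := hex
  exact ⟨k₀, hk₀, fun k hk => uniq k k₀ hk hk₀⟩

lemma dil_exu (F : Set ℝ) (hF : F ⊆ Set.Icc (1/3 : ℝ) (2/3)) {ξ : ℝ}
    (hξ : Irrational ξ) : ∃! j : ℤ, (2:ℝ)^j * ξ ∈ Sof F := by
  have hirr : ∀ j : ℤ, Irrational ((2:ℝ)^j * ξ) := by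
    intro j
    have h := hξ.ratCast_mul (q := (2:ℚ)^j) (zpow_ne_zero _ two_ne_zero)
    rwa [Rat.cast_zpow, Rat.cast_ofNat] at h
  have hmem : ∀ j : ℤ, ((2:ℝ)^j * ξ ∈ Sof F ↔
      ((2:ℝ)^j * ξ ∈ Set.Ioo (1/3 : ℝ) (2/3) ∧ (2:ℝ)^j * ξ ∈ F) ∨
      ((2:ℝ)^j * ξ ∈ Set.Ioo (2/3 : ℝ) (4/3) ∧ ((2:ℝ)^j * ξ)/2 ∈ Set.Icc (1/3 : ℝ) (2/3) \ F) ∨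
      ((2:ℝ)^j * ξ ∈ Set.Ioo (-(2/3) : ℝ) (-(1/3)) ∧ ((2:ℝ)^j * ξ) + 1 ∈ Set.Icc (1/3 : ℝ) (2/3) \ F) ∨
      ((2:ℝ)^j * ξ ∈ Set.Ioo (-(4/3) : ℝ) (-(2/3)) ∧ ((2:ℝ)^j * ξ)/2 + 1 ∈ F)) :=
    fun j => mem_Sof_iff F hF (hirr j)
  have hne0 : ξ ≠ 0 := hξ.ne_zero
  rcases hne0.lt_or_gt with hneg | hpos
  · -- ξ < 0
    have hsgn : ∀ j : ℤ, (2:ℝ)^j * ξ < 0 := fun j =>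
      mul_neg_of_pos_of_neg (zpow_pos two_pos j) hneg
    have uniq : ∀ j₁ j₂ : ℤ, (2:ℝ)^j₁ * ξ ∈ Sof F → (2:ℝ)^j₂ * ξ ∈ Sof F → j₁ = j₂ := by
      intro j₁ j₂ h₁ h₂
      rw [hmem] at h₁ h₂
      rcases h₁ with ⟨hI1, hc1⟩ | ⟨hI1, hc1⟩ | ⟨hI1, hc1⟩ | ⟨hI1, hc1⟩
      · exfalso; have := hsgn j₁; have := hI1.1; linarith
      · exfalso; have := hsgn j₁; have := hI1.1; linarith
      · rcases h₂ with ⟨hI2, hc2⟩ | ⟨hI2, hc2⟩ | ⟨hI2, hc2⟩ | ⟨hI2, hc2⟩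
        · exfalso; have := hsgn j₂; have := hI2.1; linarith
        · exfalso; have := hsgn j₂; have := hI2.1; linarith
        · -- (3,3)
          by_contra hne
          rcases (Ne.lt_or_gt hne) with hlt | hlt
          · have := gap_neg hneg (show j₁ + 1 ≤ j₂ by omega)
            have := hI1.2; have := hI2.1; linarith
          · have := gap_neg hneg (show j₂ + 1 ≤ j₁ by omega)
            have := hI2.2; have := hI1.1; linarith
        · -- (3,4)
          exfalso
          have h12 : j₁ < j₂ := by
            by_contra hle; push_neg at hle
            have := mono_neg hneg.le hle
            have := hI1.1; have := hI2.2; linarith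
          have h21 : j₂ < j₁ + 2 := by
            by_contra hle; push_neg at hle
            have hg := gap_neg hneg (show (j₁ + 1) + 1 ≤ j₂ by omega)
            have hs := step j₁ ξ
            have := hI1.2; have := hI2.1; linarith
          have hj : j₂ = j₁ + 1 := by omega
          apply hc1.2
          have he : ((2:ℝ)^j₂ * ξ)/2 + 1 = (2:ℝ)^j₁ * ξ + 1 := by
            rw [hj, step]; ring
          rw [← he]; exact hc2
      · rcases h₂ with ⟨hI2, hc2⟩ | ⟨hI2, hc2⟩ | ⟨hI2, hc2⟩ | ⟨hI2, hc2⟩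
        · exfalso; have := hsgn j₂; have := hI2.1; linarith
        · exfalso; have := hsgn j₂; have := hI2.1; linarith
        · -- (4,3)
          exfalso
          have h12 : j₂ < j₁ := by
            by_contra hle; push_neg at hle
            have := mono_neg hneg.le hle
            have := hI2.1; have := hI1.2; linarith
          have h21 : j₁ < j₂ + 2 := by
            by_contra hle; push_neg at hle
            have hg := gap_neg hneg (show (j₂ + 1) + 1 ≤ j₁ by omega)
            have hs := step j₂ ξ
            have := hI2.2; have := hI1.1; linarith
          have hj : j₁ = j₂ + 1 := by omega
          apply hc2.2
          have he : ((2:ℝ)^j₁ * ξ)/2 + 1 = (2:ℝ)^j₂ * ξ + 1 := by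
            rw [hj, step]; ring
          rw [← he]; exact hc1
        · -- (4,4)
          by_contra hne
          rcases (Ne.lt_or_gt hne) with hlt | hlt
          · have := gap_neg hneg (show j₁ + 1 ≤ j₂ by omega)
            have := hI1.2; have := hI2.1; linarith
          · have := gap_neg hneg (show j₂ + 1 ≤ j₁ by omega)
            have := hI2.2; have := hI1.1; linarith
    have hex : ∃ j : ℤ, (2:ℝ)^j * ξ ∈ Sof F := by
      obtain ⟨n, hn1, hn2⟩ := exists_mem_Ico_zpow (x := 3 * (-ξ)) (y := 2)
        (by linarith) one_lt_two
      have hp : (0:ℝ) < (2:ℝ)^(-n) := zpow_pos two_pos _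
      have e1 : (2:ℝ)^(-n) * (2:ℝ)^n = 1 := by
        rw [← zpow_add₀ (two_ne_zero : (2:ℝ) ≠ 0)]; simp
      have e2 : (2:ℝ)^(-n) * (2:ℝ)^(n+1) = 2 := by
        rw [← zpow_add₀ (two_ne_zero : (2:ℝ) ≠ 0), show -n + (n + 1) = 1 by ring, zpow_one]
      have hlow : (2:ℝ)^(-n) * ξ ≤ -(1/3) := by
        have h := mul_le_mul_of_nonneg_left hn1 hp.le
        rw [e1] at h
        have e3 : (2:ℝ)^(-n) * (3 * (-ξ)) = -3 * ((2:ℝ)^(-n) * ξ) := by ring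
        rw [e3] at h; linarith
      have hhigh : -(2/3) < (2:ℝ)^(-n) * ξ := by
        have h := mul_lt_mul_of_pos_left hn2 hp
        rw [e2] at h
        have e3 : (2:ℝ)^(-n) * (3 * (-ξ)) = -3 * ((2:ℝ)^(-n) * ξ) := by ring
        rw [e3] at h; linarith
      have hstrict : (2:ℝ)^(-n) * ξ < -(1/3) := by
        refine lt_of_le_of_ne hlow (fun e => (hirr (-n)) ⟨-(1/3), by rw [e]; norm_num⟩)
      by_cases hm : (2:ℝ)^(-n) * ξ + 1 ∈ F
      · refine ⟨-n + 1, (hmem _).2 (Or.inr (Or.inr (Or.inr ⟨⟨?_, ?_⟩, ?_⟩)))⟩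
        · rw [show (-n + 1 : ℤ) = -n + 1 from rfl, step]; linarith
        · rw [step]; linarith
        · rw [show ((2:ℝ)^(-n+1) * ξ)/2 + 1 = (2:ℝ)^(-n) * ξ + 1 by rw [step]; ring]
          exact hm
      · refine ⟨-n, (hmem _).2 (Or.inr (Or.inr (Or.inl ⟨⟨hhigh, hstrict⟩, ⟨⟨?_, ?_⟩, hm⟩⟩)))⟩
        · linarith
        · linarith
    obtain ⟨j₀, hj₀⟩ := hex
    exact ⟨j₀, hj₀, fun j hj => uniq j j₀ hj hj₀⟩
  · -- 0 < ξ
    have hsgn : ∀ j : ℤ, 0 < (2:ℝ)^j * ξ := fun j =>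
      mul_pos (zpow_pos two_pos j) hpos
    have uniq : ∀ j₁ j₂ : ℤ, (2:ℝ)^j₁ * ξ ∈ Sof F → (2:ℝ)^j₂ * ξ ∈ Sof F → j₁ = j₂ := by
      intro j₁ j₂ h₁ h₂
      rw [hmem] at h₁ h₂
      rcases h₁ with ⟨hI1, hc1⟩ | ⟨hI1, hc1⟩ | ⟨hI1, hc1⟩ | ⟨hI1, hc1⟩
      · rcases h₂ with ⟨hI2, hc2⟩ | ⟨hI2, hc2⟩ | ⟨hI2, hc2⟩ | ⟨hI2, hc2⟩
        · -- (1,1)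
          by_contra hne
          rcases (Ne.lt_or_gt hne) with hlt | hlt
          · have := gap hpos (show j₁ + 1 ≤ j₂ by omega)
            have := hI1.1; have := hI2.2; linarith
          · have := gap hpos (show j₂ + 1 ≤ j₁ by omega)
            have := hI2.1; have := hI1.2; linarith
        · -- (1,2)
          exfalso
          have h12 : j₁ < j₂ := by
            by_contra hle; push_neg at hle
            have := mono_pos hpos.le hle
            have := hI2.1; have := hI1.2; linarith
          have h21 : j₂ < j₁ + 2 := by
            by_contra hle; push_neg at hle
            have hg := gap hpos (show (j₁ + 1) + 1 ≤ j₂ by omega)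
            have hs := step j₁ ξ
            have := hI1.1; have := hI2.2; linarith
          have hj : j₂ = j₁ + 1 := by omega
          apply hc2.2
          have he : ((2:ℝ)^j₂ * ξ)/2 = (2:ℝ)^j₁ * ξ := by rw [hj, step]; ring
          rw [he]; exact hc1
        · exfalso; have := hsgn j₂; have := hI2.2; linarith
        · exfalso; have := hsgn j₂; have := hI2.2; linarith
      · rcases h₂ with ⟨hI2, hc2⟩ | ⟨hI2, hc2⟩ | ⟨hI2, hc2⟩ | ⟨hI2, hc2⟩
        · -- (2,1)
          exfalso
          have h12 : j₂ < j₁ := by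
            by_contra hle; push_neg at hle
            have := mono_pos hpos.le hle
            have := hI1.1; have := hI2.2; linarith
          have h21 : j₁ < j₂ + 2 := by
            by_contra hle; push_neg at hle
            have hg := gap hpos (show (j₂ + 1) + 1 ≤ j₁ by omega)
            have hs := step j₂ ξ
            have := hI2.1; have := hI1.2; linarith
          have hj : j₁ = j₂ + 1 := by omega
          apply hc1.2
          have he : ((2:ℝ)^j₁ * ξ)/2 = (2:ℝ)^j₂ * ξ := by rw [hj, step]; ring
          rw [he]; exact hc2
        · -- (2,2)
          by_contra hne
          rcases (Ne.lt_or_gt hne) with hlt | hlt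
          · have := gap hpos (show j₁ + 1 ≤ j₂ by omega)
            have := hI1.1; have := hI2.2; linarith
          · have := gap hpos (show j₂ + 1 ≤ j₁ by omega)
            have := hI2.1; have := hI1.2; linarith
        · exfalso; have := hsgn j₂; have := hI2.2; linarith
        · exfalso; have := hsgn j₂; have := hI2.2; linarith
      · exfalso; have := hsgn j₁; have := hI1.2; linarith
      · exfalso; have := hsgn j₁; have := hI1.2; linarith
    have hex : ∃ j : ℤ, (2:ℝ)^j * ξ ∈ Sof F := by
      obtain ⟨n, hn1, hn2⟩ := exists_mem_Ico_zpow (x := 3 * ξ) (y := 2)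
        (by linarith) one_lt_two
      have hp : (0:ℝ) < (2:ℝ)^(-n) := zpow_pos two_pos _
      have e1 : (2:ℝ)^(-n) * (2:ℝ)^n = 1 := by
        rw [← zpow_add₀ (two_ne_zero : (2:ℝ) ≠ 0)]; simp
      have e2 : (2:ℝ)^(-n) * (2:ℝ)^(n+1) = 2 := by
        rw [← zpow_add₀ (two_ne_zero : (2:ℝ) ≠ 0), show -n + (n + 1) = 1 by ring, zpow_one]
      have hlow : 1/3 ≤ (2:ℝ)^(-n) * ξ := by
        have h := mul_le_mul_of_nonneg_left hn1 hp.le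
        rw [e1] at h
        have e3 : (2:ℝ)^(-n) * (3 * ξ) = 3 * ((2:ℝ)^(-n) * ξ) := by ring
        rw [e3] at h; linarith
      have hhigh : (2:ℝ)^(-n) * ξ < 2/3 := by
        have h := mul_lt_mul_of_pos_left hn2 hp
        rw [e2] at h
        have e3 : (2:ℝ)^(-n) * (3 * ξ) = 3 * ((2:ℝ)^(-n) * ξ) := by ring
        rw [e3] at h; linarith
      have hstrict : 1/3 < (2:ℝ)^(-n) * ξ :=
        lt_of_le_of_ne hlow (fun e => (hirr (-n)) ⟨1/3, by rw [← e]; norm_num⟩)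
      by_cases hm : (2:ℝ)^(-n) * ξ ∈ F
      · exact ⟨-n, (hmem _).2 (Or.inl ⟨⟨hstrict, hhigh⟩, hm⟩)⟩
      · refine ⟨-n + 1, (hmem _).2 (Or.inr (Or.inl ⟨⟨?_, ?_⟩, ⟨⟨?_, ?_⟩, ?_⟩⟩))⟩
        · rw [step]; linarith
        · rw [step]; linarith
        · rw [show ((2:ℝ)^(-n+1) * ξ)/2 = (2:ℝ)^(-n) * ξ by rw [step]; ring]; linarith
        · rw [show ((2:ℝ)^(-n+1) * ξ)/2 = (2:ℝ)^(-n) * ξ by rw [step]; ring]; linarith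
        · rw [show ((2:ℝ)^(-n+1) * ξ)/2 = (2:ℝ)^(-n) * ξ by rw [step]; ring]; exact hm
    obtain ⟨j₀, hj₀⟩ := hex
    exact ⟨j₀, hj₀, fun j hj => uniq j j₀ hj hj₀⟩

end Stmt13Aux

open Stmt13Aux in
theorem stmt_13 (F : Set ℝ) (hF : F ⊆ Set.Icc (1/3 : ℝ) (2/3)) :
    let G : Set ℝ := Set.Icc (1/3 : ℝ) (2/3) \ F
    let S : Set ℝ := F ∪ ((fun x : ℝ => 2 * x) '' G) ∪ ((fun x : ℝ => x - 1) '' G) ∪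
      ((fun x : ℝ => 2 * (x - 1)) '' F)
    (∀ᵐ ξ ∂(volume : Measure ℝ),
      (∃! k : ℤ, ξ + (k : ℝ) ∈ S) ∧ (∃! j : ℤ, (2 : ℝ) ^ j * ξ ∈ S)) ∧
    (¬ MeasurableSet F → ¬ MeasurableSet S) := by
  intro G S
  have hSS : S = Sof F := rfl
  constructor
  · have hae : ∀ᵐ ξ ∂(volume : Measure ℝ), Irrational ξ := by
      rw [ae_iff]
      have : {x : ℝ | ¬ Irrational x} = Set.range ((↑) : ℚ → ℝ) := by
        ext x; simp [Irrational]
      rw [this]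
      exact (Set.countable_range _).measure_zero _
    filter_upwards [hae] with ξ hξ
    rw [hSS]
    exact ⟨trans_exu F hF hξ, dil_exu F hF hξ⟩
  · intro hFm hSm
    apply hFm
    have hdecomp : F = (S ∩ Set.Ioo (1/3 : ℝ) (2/3)) ∪ (F \ Set.Ioo (1/3 : ℝ) (2/3)) := by
      ext x
      constructor
      · intro hx
        by_cases h : x ∈ Set.Ioo (1/3 : ℝ) (2/3)
        · exact Or.inl ⟨Or.inl (Or.inl (Or.inl hx)), h⟩
        · exact Or.inr ⟨hx, h⟩
      · rintro (⟨hxS, hxI⟩ | ⟨hx, _⟩)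
        · rcases hxS with ((h | ⟨g, hg, rfl⟩) | ⟨g, hg, rfl⟩) | ⟨f, hf, rfl⟩
          · exact h
          · exfalso; have := hg.1.1; have := hxI.2; linarith
          · exfalso; have := hg.1.2; have := hxI.1; linarith
          · exfalso; have := (hF hf).2; have := hxI.1; linarith
        · exact hx
    rw [hdecomp]
    refine (hSm.inter measurableSet_Ioo).union ?_
    have hsub : F \ Set.Ioo (1/3 : ℝ) (2/3) ⊆ {(1/3 : ℝ), 2/3} := by
      rintro x ⟨hx, hnx⟩
      have h1 := (hF hx).1
      have h2 := (hF hx).2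
      rcases eq_or_lt_of_le h1 with he | hl
      · exact Or.inl he.symm
      rcases eq_or_lt_of_le h2 with he | hr
      · exact Or.inr he
      · exact absurd ⟨hl, hr⟩ hnx
    exact (Set.Countable.mono hsub (Set.Countable.insert _ (Set.countable_singleton _))).measurableSet
end

section
/- The set F = [1/3, 1/2] ∪ [4/3, 2] ∪ [−1/3, −1/6] contains no wavelet set: there is no Lebesgue measurable W ⊆ F that tiles ℝ by integer translations and by dyadic dilations. In fact, F contains no measurable subset that tiles ℝ by integer translations. -/
open MeasureTheory

theorem stmt_14 :
    let F : Set ℝ := Set.Icc (1/3 : ℝ) (1/2) ∪ Set.Icc (4/3 : ℝ) 2 ∪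
      Set.Icc (-(1/3) : ℝ) (-(1/6))
    (¬ ∃ W : Set ℝ, MeasurableSet W ∧ W ⊆ F ∧
        TilesByTranslations W ∧ TilesByDilations W) ∧
    (¬ ∃ W : Set ℝ, MeasurableSet W ∧ W ⊆ F ∧ TilesByTranslations W) := by
  intro F
  have key : ¬ ∃ W : Set ℝ, MeasurableSet W ∧ W ⊆ F ∧ TilesByTranslations W := by
    rintro ⟨W, -, hWF, hT⟩
    rw [TilesByTranslations, ae_iff] at hT
    have hsub : Set.Ioo (0 : ℝ) (1/3) ⊆ {ξ : ℝ | ¬ ∃! k : ℤ, ξ + (k : ℝ) ∈ W} := by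
      rintro ξ ⟨hξ0, hξ1⟩ ⟨k, hk, -⟩
      have hkF := hWF hk
      rcases hkF with (h | h) | h
      · -- 1/3 ≤ ξ + k ≤ 1/2 : forces k ≥ 1, contradiction
        obtain ⟨h1, h2⟩ := h
        have hkpos : (0 : ℤ) < k := by
          have : (0 : ℝ) < (k : ℝ) := by linarith
          exact_mod_cast this
        have : (1 : ℝ) ≤ (k : ℝ) := by exact_mod_cast hkpos
        linarith
      · -- 4/3 ≤ ξ + k ≤ 2 : forces k ≥ 2, contradiction
        obtain ⟨h1, h2⟩ := h
        have hkpos : (1 : ℤ) < k := by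
          have : (1 : ℝ) < (k : ℝ) := by linarith
          exact_mod_cast this
        have : (2 : ℝ) ≤ (k : ℝ) := by exact_mod_cast hkpos
        linarith
      · -- -1/3 ≤ ξ + k ≤ -1/6 : forces k ≤ -1, contradiction
        obtain ⟨h1, h2⟩ := h
        have hkneg : k < (0 : ℤ) := by
          have : (k : ℝ) < 0 := by linarith
          exact_mod_cast this
        have hk1 : k ≤ -1 := by omega
        have : (k : ℝ) ≤ -1 := by
          have : ((k : ℤ) : ℝ) ≤ ((-1 : ℤ) : ℝ) := Int.cast_le.mpr hk1
          simpa using this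
        linarith
    have h0 : (volume : Measure ℝ) (Set.Ioo (0 : ℝ) (1/3)) = 0 :=
      measure_mono_null hsub hT
    rw [Real.volume_Ioo] at h0
    simp only [ENNReal.ofReal_eq_zero] at h0
    linarith
  exact ⟨fun ⟨W, hm, hs, ht, _⟩ => key ⟨W, hm, hs, ht⟩, key⟩
end

section
/- The Journé set W = [−16/7, −2] ∪ [−1/2, −2/7] ∪ [2/7, 1/2] ∪ [2, 16/7] is a wavelet set: for Lebesgue-almost every ξ ∈ ℝ there is exactly one k ∈ ℤ with ξ + k ∈ W and exactly one j ∈ ℤ with 2^j ξ ∈ W. -/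
open MeasureTheory

/-- The Journé wavelet set. -/
def Wset : Set ℝ := Set.Icc (-(16/7) : ℝ) (-2) ∪ Set.Icc (-(1/2) : ℝ) (-(2/7)) ∪
      Set.Icc (2/7 : ℝ) (1/2) ∪ Set.Icc (2 : ℝ) (16/7)

lemma mem_Wset {x : ℝ} : x ∈ Wset ↔
    (-(16/7) ≤ x ∧ x ≤ -2) ∨ (-(1/2) ≤ x ∧ x ≤ -(2/7)) ∨ (2/7 ≤ x ∧ x ≤ 1/2) ∨
      (2 ≤ x ∧ x ≤ 16/7) := by
  simp [Wset, Set.mem_Icc, Set.mem_union, or_assoc]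

lemma Wset_neg {x : ℝ} (h : x ∈ Wset) : -x ∈ Wset := by
  rw [mem_Wset] at h ⊢
  rcases h with ⟨a, b⟩ | ⟨a, b⟩ | ⟨a, b⟩ | ⟨a, b⟩
  · exact Or.inr (Or.inr (Or.inr ⟨by linarith, by linarith⟩))
  · exact Or.inr (Or.inr (Or.inl ⟨by linarith, by linarith⟩))
  · exact Or.inr (Or.inl ⟨by linarith, by linarith⟩)
  · exact Or.inl ⟨by linarith, by linarith⟩

lemma key1 {m : ℤ} {r : ℝ} (h0 : 0 < r) (h1 : r < 1) (hm : ((m : ℝ) + r) ∈ Wset) :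
    (m = -3 ∧ 5/7 ≤ r) ∨ (m = -1 ∧ 1/2 ≤ r ∧ r ≤ 5/7) ∨ (m = 0 ∧ 2/7 ≤ r ∧ r ≤ 1/2) ∨
      (m = 2 ∧ r ≤ 2/7) := by
  rw [mem_Wset] at hm
  rcases hm with ⟨a, b⟩ | ⟨a, b⟩ | ⟨a, b⟩ | ⟨a, b⟩
  · have hm1 : (-4 : ℝ) < (m : ℝ) := by linarith
    have hm2 : (m : ℝ) < -2 := by linarith
    have e1 : (-4 : ℤ) < m := by exact_mod_cast hm1
    have e2 : m < -2 := by exact_mod_cast hm2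
    have hm3 : m = -3 := by omega
    subst hm3
    refine Or.inl ⟨rfl, ?_⟩
    push_cast at a
    linarith
  · have hm1 : (-2 : ℝ) < (m : ℝ) := by linarith
    have hm2 : (m : ℝ) < 0 := by linarith
    have e1 : (-2 : ℤ) < m := by exact_mod_cast hm1
    have e2 : m < 0 := by exact_mod_cast hm2
    have hm3 : m = -1 := by omega
    subst hm3
    refine Or.inr (Or.inl ⟨rfl, ?_, ?_⟩) <;> push_cast at a b <;> linarith
  · have hm1 : (-1 : ℝ) < (m : ℝ) := by linarith
    have hm2 : (m : ℝ) < 1 := by linarith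
    have e1 : (-1 : ℤ) < m := by exact_mod_cast hm1
    have e2 : m < 1 := by exact_mod_cast hm2
    have hm3 : m = 0 := by omega
    subst hm3
    refine Or.inr (Or.inr (Or.inl ⟨rfl, ?_, ?_⟩)) <;> push_cast at a b <;> linarith
  · have hm1 : (1 : ℝ) < (m : ℝ) := by linarith
    have hm2 : (m : ℝ) < 3 := by linarith
    have e1 : (1 : ℤ) < m := by exact_mod_cast hm1
    have e2 : m < 3 := by exact_mod_cast hm2
    have hm3 : m = 2 := by omega
    subst hm3
    refine Or.inr (Or.inr (Or.inr ⟨rfl, ?_⟩))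
    push_cast at b
    linarith

lemma transl (ξ : ℝ) (h0 : Int.fract ξ ≠ 0) (h2 : Int.fract ξ ≠ 2/7)
    (h5 : Int.fract ξ ≠ 1/2) (h7 : Int.fract ξ ≠ 5/7) :
    ∃! k : ℤ, ξ + (k : ℝ) ∈ Wset := by
  set r := Int.fract ξ with hrdef
  have hr0 : 0 < r := lt_of_le_of_ne (Int.fract_nonneg ξ) (Ne.symm h0)
  have hr1 : r < 1 := Int.fract_lt_one ξ
  have hξ : (⌊ξ⌋ : ℝ) + r = ξ := Int.floor_add_fract ξ
  set n := ⌊ξ⌋ with hn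
  have hrep : ∀ k : ℤ, ξ + (k : ℝ) = ((n + k : ℤ) : ℝ) + r := by
    intro k; push_cast; linarith
  rcases lt_or_gt_of_ne h2 with hA | hA
  · -- r ∈ (0, 2/7), k = 2 - n
    refine ⟨2 - n, ?_, ?_⟩
    · show ξ + ((2 - n : ℤ) : ℝ) ∈ Wset
      rw [hrep, mem_Wset]
      refine Or.inr (Or.inr (Or.inr ⟨?_, ?_⟩)) <;> push_cast <;> linarith
    · intro k' hk'
      rw [hrep] at hk'
      rcases key1 hr0 hr1 hk' with ⟨h, hr⟩ | ⟨h, hr, _⟩ | ⟨h, hr, _⟩ | ⟨h, _⟩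
      · linarith
      · linarith
      · linarith
      · omega
  rcases lt_or_gt_of_ne h5 with hB | hB
  · -- r ∈ (2/7, 1/2), k = -n
    refine ⟨-n, ?_, ?_⟩
    · show ξ + ((-n : ℤ) : ℝ) ∈ Wset
      rw [hrep, mem_Wset]
      refine Or.inr (Or.inr (Or.inl ⟨?_, ?_⟩)) <;> push_cast <;> linarith
    · intro k' hk'
      rw [hrep] at hk'
      rcases key1 hr0 hr1 hk' with ⟨h, hr⟩ | ⟨h, hr, _⟩ | ⟨h, _, _⟩ | ⟨h, hr⟩
      · linarith
      · linarith
      · omega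
      · linarith
  rcases lt_or_gt_of_ne h7 with hC | hC
  · -- r ∈ (1/2, 5/7), k = -1 - n
    refine ⟨-1 - n, ?_, ?_⟩
    · show ξ + ((-1 - n : ℤ) : ℝ) ∈ Wset
      rw [hrep, mem_Wset]
      refine Or.inr (Or.inl ⟨?_, ?_⟩) <;> push_cast <;> linarith
    · intro k' hk'
      rw [hrep] at hk'
      rcases key1 hr0 hr1 hk' with ⟨h, hr⟩ | ⟨h, _, _⟩ | ⟨h, _, hr⟩ | ⟨h, hr⟩
      · linarith
      · omega
      · linarith
      · linarith
  · -- r ∈ (5/7, 1), k = -3 - n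
    refine ⟨-3 - n, ?_, ?_⟩
    · show ξ + ((-3 - n : ℤ) : ℝ) ∈ Wset
      rw [hrep, mem_Wset]
      refine Or.inl ⟨?_, ?_⟩ <;> push_cast <;> linarith
    · intro k' hk'
      rw [hrep] at hk'
      rcases key1 hr0 hr1 hk' with ⟨h, _⟩ | ⟨h, _, hr⟩ | ⟨h, _, hr⟩ | ⟨h, hr⟩
      · omega
      · linarith
      · linarith
      · linarith

lemma key2 {j : ℤ} {t : ℝ} (h1 : 1 < t) (h2 : t < 2) (hm : (2 : ℝ) ^ j * t ∈ Wset) :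
    (j = 1 ∧ t ≤ 8/7) ∨ (j = -2 ∧ 8/7 ≤ t) := by
  have hp : (0 : ℝ) < (2 : ℝ) ^ j := zpow_pos (by norm_num) j
  have hlow : (2 : ℝ) ^ j * 1 < (2 : ℝ) ^ j * t := by
    exact mul_lt_mul_of_pos_left h1 hp
  have hhigh : (2 : ℝ) ^ j * t < (2 : ℝ) ^ j * 2 := by
    exact mul_lt_mul_of_pos_left h2 hp
  rw [mem_Wset] at hm
  rcases hm with ⟨a, b⟩ | ⟨a, b⟩ | ⟨a, b⟩ | ⟨a, b⟩
  · nlinarith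
  · nlinarith
  · -- 2/7 ≤ 2^j t ≤ 1/2 : j = -2
    have u1 : (2 : ℝ) ^ j < (2 : ℝ) ^ (-1 : ℤ) := by
      have e : ((2 : ℝ) ^ (-1 : ℤ)) = 1/2 := by norm_num
      rw [e]; nlinarith
    have u2 : (2 : ℝ) ^ (-3 : ℤ) < (2 : ℝ) ^ j := by
      have e : ((2 : ℝ) ^ (-3 : ℤ)) = 1/8 := by norm_num
      rw [e]; nlinarith
    have j1 : j < -1 := (zpow_lt_zpow_iff_right₀ (by norm_num : (1:ℝ) < 2)).mp u1
    have j2 : (-3 : ℤ) < j := (zpow_lt_zpow_iff_right₀ (by norm_num : (1:ℝ) < 2)).mp u2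
    have hj : j = -2 := by omega
    subst hj
    refine Or.inr ⟨rfl, ?_⟩
    have : ((2 : ℝ) ^ (-2 : ℤ)) = 1/4 := by norm_num
    rw [this] at a
    linarith
  · -- 2 ≤ 2^j t ≤ 16/7 : j = 1
    have u1 : (2 : ℝ) ^ j < (2 : ℝ) ^ (2 : ℤ) := by
      have e : ((2 : ℝ) ^ (2 : ℤ)) = 4 := by norm_num
      rw [e]; nlinarith
    have u2 : (2 : ℝ) ^ (0 : ℤ) < (2 : ℝ) ^ j := by
      have e : ((2 : ℝ) ^ (0 : ℤ)) = 1 := by norm_num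
      rw [e]; nlinarith
    have j1 : j < 2 := (zpow_lt_zpow_iff_right₀ (by norm_num : (1:ℝ) < 2)).mp u1
    have j2 : (0 : ℤ) < j := (zpow_lt_zpow_iff_right₀ (by norm_num : (1:ℝ) < 2)).mp u2
    have hj : j = 1 := by omega
    subst hj
    refine Or.inl ⟨rfl, ?_⟩
    have : ((2 : ℝ) ^ (1 : ℤ)) = 2 := by norm_num
    rw [this] at b
    linarith

lemma dil_pos (x : ℝ) (hx : 0 < x) (ht1 : x ≠ (2 : ℝ) ^ (Int.log 2 x))
    (ht2 : x ≠ 8/7 * (2 : ℝ) ^ (Int.log 2 x)) :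
    ∃! j : ℤ, (2 : ℝ) ^ j * x ∈ Wset := by
  set m := Int.log 2 x with hm
  have hpow : (0 : ℝ) < (2 : ℝ) ^ m := zpow_pos (by norm_num) m
  set t := x / (2 : ℝ) ^ m with htdef
  have hx_eq : x = (2 : ℝ) ^ m * t := by
    rw [htdef, mul_div_assoc', eq_div_iff hpow.ne', mul_comm]
  have ht_lb : 1 ≤ t := by
    rw [htdef, le_div_iff₀ hpow, one_mul]
    have := Int.zpow_log_le_self (b := 2) (by norm_num) hx
    exact_mod_cast this
  have ht_ub : t < 2 := by
    rw [htdef, div_lt_iff₀ hpow]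
    have h := Int.lt_zpow_succ_log_self (b := 2) (by norm_num) x
    have e : ((2 : ℕ) : ℝ) ^ (Int.log 2 x + 1) = 2 * (2 : ℝ) ^ m := by
      push_cast
      rw [zpow_add_one₀ (by norm_num : (2:ℝ) ≠ 0)]
      ring
    rw [e] at h
    exact h
  have ht1' : 1 < t := lt_of_le_of_ne ht_lb fun h => ht1 (by rw [hx_eq, ← h, mul_one])
  have ht2' : t ≠ 8/7 := fun h => ht2 (by rw [hx_eq, h]; ring)
  have hrep : ∀ j : ℤ, (2 : ℝ) ^ j * x = (2 : ℝ) ^ (j + m) * t := by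
    intro j
    rw [hx_eq, zpow_add₀ (by norm_num : (2:ℝ) ≠ 0)]
    ring
  rcases lt_or_gt_of_ne ht2' with hc | hc
  · -- t ∈ (1, 8/7) : j = 1 - m
    refine ⟨1 - m, ?_, ?_⟩
    · show (2 : ℝ) ^ ((1 : ℤ) - m) * x ∈ Wset
      rw [hrep]
      have e : (1 : ℤ) - m + m = 1 := by ring
      rw [e, mem_Wset]
      have e2 : ((2 : ℝ) ^ (1 : ℤ)) = 2 := by norm_num
      rw [e2]
      exact Or.inr (Or.inr (Or.inr ⟨by linarith, by linarith⟩))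
    · intro j hj
      rw [hrep] at hj
      rcases key2 ht1' ht_ub hj with ⟨h, _⟩ | ⟨h, hge⟩
      · omega
      · linarith
  · -- t ∈ (8/7, 2) : j = -2 - m
    refine ⟨-2 - m, ?_, ?_⟩
    · show (2 : ℝ) ^ ((-2 : ℤ) - m) * x ∈ Wset
      rw [hrep]
      have e : (-2 : ℤ) - m + m = -2 := by ring
      rw [e, mem_Wset]
      have e2 : ((2 : ℝ) ^ (-2 : ℤ)) = 1/4 := by norm_num
      rw [e2]
      exact Or.inr (Or.inr (Or.inl ⟨by linarith, by linarith⟩))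
    · intro j hj
      rw [hrep] at hj
      rcases key2 ht1' ht_ub hj with ⟨h, hle⟩ | ⟨h, _⟩
      · linarith
      · omega

/-- Exceptional set for the translation tiling. -/
def Eone : Set ℝ := ⋃ k : ℤ, ({(k : ℝ), 2/7 + (k : ℝ), 1/2 + (k : ℝ), 5/7 + (k : ℝ)} : Set ℝ)

/-- Exceptional set for the dilation tiling. -/
def Etwo : Set ℝ :=
  {0} ∪ ⋃ m : ℤ, ({(2 : ℝ) ^ m, 8/7 * (2 : ℝ) ^ m, -((2 : ℝ) ^ m), -(8/7 * (2 : ℝ) ^ m)} : Set ℝ)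

lemma Eone_countable : Eone.Countable := by
  refine Set.countable_iUnion fun k => ?_
  exact (Set.toFinite _).countable

lemma Etwo_countable : Etwo.Countable := by
  refine Set.Countable.union (Set.countable_singleton _) ?_
  refine Set.countable_iUnion fun m => ?_
  exact (Set.toFinite _).countable

lemma fract_escape {ξ : ℝ} (h : ξ ∉ Eone) :
    Int.fract ξ ≠ 0 ∧ Int.fract ξ ≠ 2/7 ∧ Int.fract ξ ≠ 1/2 ∧ Int.fract ξ ≠ 5/7 := by
  have hξ : (⌊ξ⌋ : ℝ) + Int.fract ξ = ξ := Int.floor_add_fract ξ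
  refine ⟨?_, ?_, ?_, ?_⟩ <;> intro hc <;> apply h <;>
    refine Set.mem_iUnion.mpr ⟨⌊ξ⌋, ?_⟩ <;> rw [hc] at hξ <;>
    simp only [Set.mem_insert_iff, Set.mem_singleton_iff]
  · exact Or.inl (by linarith)
  · exact Or.inr (Or.inl (by linarith))
  · exact Or.inr (Or.inr (Or.inl (by linarith)))
  · exact Or.inr (Or.inr (Or.inr (by linarith)))

lemma dil_escape {x : ℝ} (h : x ∉ Etwo) (hx : 0 < x) :
    x ≠ (2 : ℝ) ^ (Int.log 2 x) ∧ x ≠ 8/7 * (2 : ℝ) ^ (Int.log 2 x) := by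
  constructor <;> intro hc <;> apply h <;> refine Or.inr (Set.mem_iUnion.mpr ⟨Int.log 2 x, ?_⟩) <;>
    simp only [Set.mem_insert_iff, Set.mem_singleton_iff]
  · exact Or.inl hc
  · exact Or.inr (Or.inl hc)

lemma dil (ξ : ℝ) (h : ξ ∉ Etwo) : ∃! j : ℤ, (2 : ℝ) ^ j * ξ ∈ Wset := by
  have hne : ξ ≠ 0 := fun hc => h (Or.inl hc)
  rcases hne.lt_or_gt with hneg | hpos
  · -- ξ < 0
    have hx : (0 : ℝ) < -ξ := by linarith
    have h' : -ξ ∉ Etwo := by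
      intro hc
      apply h
      rcases hc with hc | hc
      · exact absurd hc (by simpa using hne)
      · rcases Set.mem_iUnion.mp hc with ⟨m, hm⟩
        refine Or.inr (Set.mem_iUnion.mpr ⟨m, ?_⟩)
        simp only [Set.mem_insert_iff, Set.mem_singleton_iff] at hm ⊢
        rcases hm with h1 | h1 | h1 | h1
        · exact Or.inr (Or.inr (Or.inl (by linarith)))
        · exact Or.inr (Or.inr (Or.inr (by linarith)))
        · exact Or.inl (by linarith)
        · exact Or.inr (Or.inl (by linarith))
    obtain ⟨he1, he2⟩ := dil_escape h' hx
    have hiff : ∀ j : ℤ, ((2 : ℝ) ^ j * ξ ∈ Wset ↔ (2 : ℝ) ^ j * (-ξ) ∈ Wset) := by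
      intro j
      constructor
      · intro hw
        simpa [mul_neg] using Wset_neg hw
      · intro hw
        have := Wset_neg hw
        simpa [mul_neg] using this
    simp only [hiff]
    exact dil_pos (-ξ) hx he1 he2
  · obtain ⟨he1, he2⟩ := dil_escape h hpos
    exact dil_pos ξ hpos he1 he2

theorem stmt_16 :
    let W : Set ℝ := Set.Icc (-(16/7) : ℝ) (-2) ∪ Set.Icc (-(1/2) : ℝ) (-(2/7)) ∪
      Set.Icc (2/7 : ℝ) (1/2) ∪ Set.Icc (2 : ℝ) (16/7)
    ∀ᵐ ξ ∂(volume : Measure ℝ),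
      (∃! k : ℤ, ξ + (k : ℝ) ∈ W) ∧ (∃! j : ℤ, (2 : ℝ) ^ j * ξ ∈ W) := by
  intro W
  have hE : volume (Eone ∪ Etwo) = 0 :=
    measure_union_null (Eone_countable.measure_zero _) (Etwo_countable.measure_zero _)
  rw [MeasureTheory.ae_iff]
  refine measure_mono_null ?_ hE
  intro ξ hξ
  by_contra hcon
  apply hξ
  have h1 : ξ ∉ Eone := fun hc => hcon (Or.inl hc)
  have h2 : ξ ∉ Etwo := fun hc => hcon (Or.inr hc)
  obtain ⟨e0, e2, e5, e7⟩ := fract_escape h1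
  exact ⟨transl ξ e0 e2 e5 e7, dil ξ h2⟩
end
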